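/- Signature structural rules: the signature weakening rule SW — from S{X; Γ ⇒ Δ} infer S{X,x; Γ ⇒ Δ} — and the signature contraction rule SC — from S{X,x,x; Γ ⇒ Δ} infer S{X,x; Γ ⇒ Δ} — are height-preserving admissible in every properly closed nested calculus NQ.L. -/

import Mathlib

set_option maxHeartbeats 1000000

namespace NQML

/-! ## The first-order modal language 𝓛 -/

/-- Formulas of the first-order modal language 𝓛:
`A ::= R i (x₁,…,xₙ) | x = y | ⊥ | A ⊃ A | ∀x A | □A`, variables are natural numbers. -/
inductive Fml : Type
  | rel : ℕ → List ℕ → Fml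
  | eq  : ℕ → ℕ → Fml
  | bot : Fml
  | imp : Fml → Fml → Fml
  | all : ℕ → Fml → Fml
  | box : Fml → Fml
  deriving DecidableEq

namespace Fml

/-- Atomic formulas. -/
def Atomic : Fml → Prop
  | rel _ _ => True
  | eq _ _  => True
  | _       => False

/-- Free variables of a formula. -/
def fv : Fml → Finset ℕ
  | rel _ l => l.toFinset
  | eq a b  => {a, b}
  | bot     => ∅
  | imp A B => fv A ∪ fv B
  | all z A => (fv A).erase z
  | box A   => fv A

/-- Capture-avoiding application of a renaming `σ` to the free variables of a formula;
bound variables are renamed when a capture would occur. -/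
def substF : (ℕ → ℕ) → Fml → Fml
  | σ, rel n l => rel n (l.map σ)
  | σ, eq a b  => eq (σ a) (σ b)
  | _, bot     => bot
  | σ, imp A B => imp (substF σ A) (substF σ B)
  | σ, box A   => box (substF σ A)
  | σ, all z A =>
      let captured := ((fv A).erase z).image σ
      let z' := if z ∈ captured then captured.sup id + 1 else z
      all z' (substF (Function.update σ z z') A)

/-- `A.sub y x` is `A(y/x)`: the capture-avoiding substitution of `y` for the free
occurrences of `x` in `A`. -/
def sub (A : Fml) (y x : ℕ) : Fml := substF (fun v => if v = x then y else v) A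

/-- Defined connectives. -/
def neg (A : Fml) : Fml := imp A bot
def top : Fml := imp bot bot
def conj (A B : Fml) : Fml := neg (imp A (neg B))
def disj (A B : Fml) : Fml := imp (neg A) B
def ex (x : ℕ) (A : Fml) : Fml := neg (all x (neg A))

/-- The existence predicate `𝓔 x := ∃ y (y = x)` (with `y` a variable distinct from `x`). -/
def Epred (x : ℕ) : Fml := ex (x + 1) (eq (x + 1) x)

end Fml

/-! ## Nested sequents -/

mutual
  /-- Nested sequents `S ::= X;Γ⇒Δ | S,[S],…,[S]`: a node carries a signature `X`
  (a multiset of variables), an antecedent `Γ` and a succedent `Δ` (multisets of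
  formulas), and a list of bracketed nested sequents. -/
  inductive NSeq : Type
    | node : Multiset ℕ → Multiset Fml → Multiset Fml → NSeqs → NSeq
  /-- Lists of nested sequents. -/
  inductive NSeqs : Type
    | nil  : NSeqs
    | cons : NSeq → NSeqs → NSeqs
end

namespace NSeqs
def append : NSeqs → NSeqs → NSeqs
  | nil, t => t
  | cons s ss, t => cons s (append ss t)
end NSeqs

instance : Append NSeqs := ⟨NSeqs.append⟩

/-- Merging two nested sequents at the root. -/
def NSeq.merge : NSeq → NSeq → NSeq
  | .node X Γ Δ cs, .node Y Φ Ψ ds => .node (X + Y) (Γ + Φ) (Δ + Ψ) (cs ++ ds)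

/-- Free variables of a multiset of formulas. -/
def msFv (Γ : Multiset Fml) : Finset ℕ := (Γ.map Fml.fv).sup

mutual
  /-- Variables occurring (in the signature or free in a formula) in a nested sequent. -/
  def NSeq.fv : NSeq → Finset ℕ
    | .node X Γ Δ cs => X.toFinset ∪ msFv Γ ∪ msFv Δ ∪ NSeqs.fv cs
  def NSeqs.fv : NSeqs → Finset ℕ
    | .nil => ∅
    | .cons s ss => NSeq.fv s ∪ NSeqs.fv ss
end

mutual
  /-- Componentwise application of a renaming to a nested sequent. -/
  def NSeq.subst : NSeq → (ℕ → ℕ) → NSeq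
    | .node X Γ Δ cs, σ =>
        .node (X.map σ) (Γ.map (Fml.substF σ)) (Δ.map (Fml.substF σ)) (NSeqs.subst cs σ)
  def NSeqs.subst : NSeqs → (ℕ → ℕ) → NSeqs
    | .nil, _ => .nil
    | .cons s ss, σ => .cons (NSeq.subst s σ) (NSeqs.subst ss σ)
end

/-! ## Contexts -/

mutual
  /-- Contexts: nested sequents with holes in consequent position.  A node records
  how many holes occur at that node together with the bracketed sub-contexts. -/
  inductive NCtx : Type
    | node : Multiset ℕ → Multiset Fml → Multiset Fml → ℕ → NCtxs → NCtx
  inductive NCtxs : Type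
    | nil  : NCtxs
    | cons : NCtx → NCtxs → NCtxs
end

namespace NCtxs
def append : NCtxs → NCtxs → NCtxs
  | nil, t => t
  | cons c cs, t => cons c (append cs t)
end NCtxs

instance : Append NCtxs := ⟨NCtxs.append⟩

mutual
  /-- The number of holes of a context. -/
  def NCtx.holes : NCtx → ℕ
    | .node _ _ _ k cs => k + NCtxs.holes cs
  def NCtxs.holes : NCtxs → ℕ
    | .nil => 0
    | .cons c cs => NCtx.holes c + NCtxs.holes cs
end

mutual
  /-- The list of depths of the holes of a context (in the order in which they are filled). -/
  def NCtx.holeDepths : NCtx → List ℕ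
    | .node _ _ _ k cs => List.replicate k 0 ++ (NCtxs.holeDepths cs).map (· + 1)
  def NCtxs.holeDepths : NCtxs → List ℕ
    | .nil => []
    | .cons c cs => NCtx.holeDepths c ++ NCtxs.holeDepths cs
end

mutual
  /-- Filling the holes of a context with a list of nested sequents: each nested sequent
  is merged at the node where the corresponding hole occurs. -/
  def NCtx.fill : NCtx → List NSeq → NSeq
    | .node X Γ Δ k cs, L =>
        (L.take k).foldl NSeq.merge (.node X Γ Δ (NCtxs.fill cs (L.drop k)))
  def NCtxs.fill : NCtxs → List NSeq → NSeqs
    | .nil, _ => .nil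
    | .cons c cs, L =>
        .cons (NCtx.fill c (L.take (NCtx.holes c))) (NCtxs.fill cs (L.drop (NCtx.holes c)))
end

/-- Merging two contexts at the root. -/
def NCtx.mergeC : NCtx → NCtx → NCtx
  | .node X Γ Δ k cs, .node Y Φ Ψ j ds => .node (X + Y) (Γ + Φ) (Δ + Ψ) (k + j) (cs ++ ds)

mutual
  /-- Plugging a context into the first hole of a context. -/
  def NCtx.plug : NCtx → NCtx → NCtx
    | .node X Γ Δ k cs, D =>
        if k = 0 then .node X Γ Δ k (NCtxs.plug cs D)
        else NCtx.mergeC (.node X Γ Δ (k - 1) cs) D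
  def NCtxs.plug : NCtxs → NCtx → NCtxs
    | .nil, _ => .nil
    | .cons c cs, D =>
        if NCtx.holes c = 0 then .cons c (NCtxs.plug cs D) else .cons (NCtx.plug c D) cs
end

/-! ## Frames, axioms and proper closure -/

/-- The axioms D, T, B, 4, 5, CBF, BF, UI. -/
inductive Ax : Type
  | D | T | B | four | five | cbf | bf | ui
  deriving DecidableEq

/-- A frame `⟨W, R, D⟩` with worlds `W`, accessibility `Rel` and domains `Dom` over a
universe `U` of objects; some world has a nonempty domain. -/
structure Frame (W U : Type) : Type where
  Rel : W → W → Prop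
  Dom : W → Set U
  nonempty : Nonempty W
  dom_nonempty : ∃ w, (Dom w).Nonempty

/-- The frame/domain condition corresponding to each axiom. -/
def Frame.sat {W U : Type} (F : Frame W U) : Ax → Prop
  | .D    => ∀ w, ∃ v, F.Rel w v
  | .T    => ∀ w, F.Rel w w
  | .B    => ∀ w v, F.Rel w v → F.Rel v w
  | .four => ∀ w v u, F.Rel w v → F.Rel v u → F.Rel w u
  | .five => ∀ w v u, F.Rel w v → F.Rel w u → F.Rel v u
  | .cbf  => ∀ w v, F.Rel w v → F.Dom w ⊆ F.Dom v
  | .bf   => ∀ w v, F.Rel w v → F.Dom v ⊆ F.Dom w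
  | .ui   => ∀ w v, F.Dom w = F.Dom v

/-- A `Q.L`-frame: a frame satisfying the conditions of all axioms in `L`. -/
def FrameFor {W U : Type} (F : Frame W U) (L : Set Ax) : Prop := ∀ a ∈ L, F.sat a

/-- `L` is properly closed: whenever every `Q.L`-frame satisfies the frame condition of an
axiom among 4, 5, CBF, BF, that axiom belongs to `L`. -/
def ProperlyClosed (L : Set Ax) : Prop :=
  ∀ a ∈ ({Ax.four, Ax.five, Ax.cbf, Ax.bf} : Set Ax),
    (∀ (W U : Type) (F : Frame W U), FrameFor F L → F.sat a) → a ∈ L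

/-! ## Models, satisfaction, validity and the formula interpretation -/

/-- A model: a frame together with a valuation interpreting each `n`-ary relation symbol
at each world by tuples of objects from the union of the domains. -/
structure Model (W U : Type) extends Frame W U where
  Val : W → ℕ → List U → Prop
  val_dom : ∀ w i l, Val w i l → ∀ u ∈ l, ∃ v, u ∈ Dom v

/-- Satisfaction of a formula at a world under an assignment (variables are rigid). -/
def Model.sat {W U : Type} (M : Model W U) : (ℕ → U) → W → Fml → Prop
  | σ, w, .rel i l => M.Val w i (l.map σ)
  | σ, _, .eq a b  => σ a = σ b
  | _, _, .bot     => False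
  | σ, w, .imp A B => M.sat σ w A → M.sat σ w B
  | σ, w, .all x A => ∀ u ∈ M.Dom w, M.sat (Function.update σ x u) w A
  | σ, w, .box A   => ∀ v, M.Rel w v → M.sat σ v A

/-- An assignment maps every variable into the union of the domains. -/
def Assign {W U : Type} (M : Model W U) (σ : ℕ → U) : Prop := ∀ x, ∃ w, σ x ∈ M.Dom w

/-- `Q.L`-validity: truth at every world of every model on a `Q.L`-frame under every
assignment. -/
def Valid (L : Set Ax) (A : Fml) : Prop :=
  ∀ (W U : Type) (M : Model W U), FrameFor M.toFrame L →
    ∀ σ, Assign M σ → ∀ w, M.sat σ w A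

/-- Iterated conjunction and disjunction. -/
def listConj : List Fml → Fml
  | [] => Fml.top
  | A :: l => Fml.conj A (listConj l)

def listDisj : List Fml → Fml
  | [] => Fml.bot
  | A :: l => Fml.disj A (listDisj l)

mutual
  /-- The formula interpretation of a nested sequent:
  `fm(X;Γ⇒Δ,[S₁],…,[Sₙ]) = (⋀_{x∈X} 𝓔x ∧ ⋀Γ ⊃ ⋁Δ) ∨ ⋁ₖ □ fm(Sₖ)`. -/
  noncomputable def NSeq.fm : NSeq → Fml
    | .node X Γ Δ cs =>
        Fml.disj
          (Fml.imp (Fml.conj (listConj (X.toList.map Fml.Epred)) (listConj Γ.toList))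
            (listDisj Δ.toList))
          (NSeqs.fmDisj cs)
  noncomputable def NSeqs.fmDisj : NSeqs → Fml
    | .nil => Fml.bot
    | .cons s ss => Fml.disj (Fml.box (NSeq.fm s)) (NSeqs.fmDisj ss)
end

/-! ## The nested calculus NQ.L -/

/-- A single rule application (instance) of the nested calculus `NQ.L`: `Step L ps S`
says that `S` can be inferred from the list of premisses `ps` by one rule of `NQ.L`. -/
inductive Step (L : Set Ax) : List NSeq → NSeq → Prop
  /-- Initial sequents `S{X; P,Γ ⇒ Δ,P}` with `P` atomic. -/
  | init (C : NCtx) (X : Multiset ℕ) (Γ Δ : Multiset Fml) (P : Fml) :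
      C.holes = 1 → P.Atomic →
      Step L [] (C.fill [.node X (P ::ₘ Γ) (P ::ₘ Δ) .nil])
  /-- `L⊥`. -/
  | botL (C : NCtx) (X : Multiset ℕ) (Γ Δ : Multiset Fml) :
      C.holes = 1 →
      Step L [] (C.fill [.node X (Fml.bot ::ₘ Γ) Δ .nil])
  /-- `L⊃`. -/
  | impL (C : NCtx) (X : Multiset ℕ) (Γ Δ : Multiset Fml) (A B : Fml) :
      C.holes = 1 →
      Step L [C.fill [.node X Γ (A ::ₘ Δ) .nil], C.fill [.node X (B ::ₘ Γ) Δ .nil]]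
        (C.fill [.node X (Fml.imp A B ::ₘ Γ) Δ .nil])
  /-- `R⊃`. -/
  | impR (C : NCtx) (X : Multiset ℕ) (Γ Δ : Multiset Fml) (A B : Fml) :
      C.holes = 1 →
      Step L [C.fill [.node X (A ::ₘ Γ) (B ::ₘ Δ) .nil]]
        (C.fill [.node X Γ (Fml.imp A B ::ₘ Δ) .nil])
  /-- `L∀`. -/
  | allL (C : NCtx) (X : Multiset ℕ) (Γ Δ : Multiset Fml) (x z : ℕ) (A : Fml) :
      C.holes = 1 →
      Step L [C.fill [.node (z ::ₘ X) (A.sub z x ::ₘ Fml.all x A ::ₘ Γ) Δ .nil]]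
        (C.fill [.node (z ::ₘ X) (Fml.all x A ::ₘ Γ) Δ .nil])
  /-- `R∀` with `y` fresh. -/
  | allR (C : NCtx) (X : Multiset ℕ) (Γ Δ : Multiset Fml) (x y : ℕ) (A : Fml) :
      C.holes = 1 → y ∉ NSeq.fv (C.fill [.node X Γ (Fml.all x A ::ₘ Δ) .nil]) →
      Step L [C.fill [.node (y ::ₘ X) Γ (A.sub y x ::ₘ Δ) .nil]]
        (C.fill [.node X Γ (Fml.all x A ::ₘ Δ) .nil])
  /-- `L□`. -/
  | boxL (C : NCtx) (X Y : Multiset ℕ) (Γ Δ Φ Ψ : Multiset Fml) (ts : NSeqs) (A : Fml) :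
      C.holes = 1 →
      Step L [C.fill [.node X (Fml.box A ::ₘ Γ) Δ (.cons (.node Y (A ::ₘ Φ) Ψ ts) .nil)]]
        (C.fill [.node X (Fml.box A ::ₘ Γ) Δ (.cons (.node Y Φ Ψ ts) .nil)])
  /-- `R□`. -/
  | boxR (C : NCtx) (X : Multiset ℕ) (Γ Δ : Multiset Fml) (A : Fml) :
      C.holes = 1 →
      Step L [C.fill [.node X Γ Δ (.cons (.node 0 0 {A} .nil) .nil)]]
        (C.fill [.node X Γ (Fml.box A ::ₘ Δ) .nil])
  /-- `Ref`. -/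
  | ref (C : NCtx) (X : Multiset ℕ) (Γ Δ : Multiset Fml) (x : ℕ) :
      C.holes = 1 →
      Step L [C.fill [.node X (Fml.eq x x ::ₘ Γ) Δ .nil]] (C.fill [.node X Γ Δ .nil])
  /-- `Repl` (with `P` atomic). -/
  | repl (C : NCtx) (X : Multiset ℕ) (Γ Δ : Multiset Fml) (x y z : ℕ) (P : Fml) :
      C.holes = 1 → P.Atomic →
      Step L [C.fill [.node X (P.sub y z ::ₘ Fml.eq x y ::ₘ P.sub x z ::ₘ Γ) Δ .nil]]
        (C.fill [.node X (Fml.eq x y ::ₘ P.sub x z ::ₘ Γ) Δ .nil])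
  /-- `Repl_X`. -/
  | replX (C : NCtx) (X : Multiset ℕ) (Γ Δ : Multiset Fml) (x y : ℕ) :
      C.holes = 1 →
      Step L [C.fill [.node (x ::ₘ y ::ₘ X) (Fml.eq x y ::ₘ Γ) Δ .nil]]
        (C.fill [.node (x ::ₘ X) (Fml.eq x y ::ₘ Γ) Δ .nil])
  /-- `Rig`. -/
  | rig (C : NCtx) (X Y : Multiset ℕ) (Γ Δ Φ Ψ : Multiset Fml) (x y : ℕ) :
      C.holes = 2 →
      Step L [C.fill [.node X (Fml.eq x y ::ₘ Γ) Δ .nil, .node Y (Fml.eq x y ::ₘ Φ) Ψ .nil]]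
        (C.fill [.node X (Fml.eq x y ::ₘ Γ) Δ .nil, .node Y Φ Ψ .nil])
  /-- `R_D`. -/
  | rD (C : NCtx) (X : Multiset ℕ) (Γ Δ : Multiset Fml) :
      Ax.D ∈ L → C.holes = 1 →
      Step L [C.fill [.node X Γ Δ (.cons (.node 0 0 0 .nil) .nil)]]
        (C.fill [.node X Γ Δ .nil])
  /-- `R_T`. -/
  | rT (C : NCtx) (X : Multiset ℕ) (Γ Δ : Multiset Fml) (A : Fml) :
      Ax.T ∈ L → C.holes = 1 →
      Step L [C.fill [.node X (A ::ₘ Fml.box A ::ₘ Γ) Δ .nil]]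
        (C.fill [.node X (Fml.box A ::ₘ Γ) Δ .nil])
  /-- `R_B`. -/
  | rB (C : NCtx) (X Y : Multiset ℕ) (Γ Δ Φ Ψ : Multiset Fml) (ts : NSeqs) (A : Fml) :
      Ax.B ∈ L → C.holes = 1 →
      Step L [C.fill [.node X (A ::ₘ Γ) Δ (.cons (.node Y (Fml.box A ::ₘ Φ) Ψ ts) .nil)]]
        (C.fill [.node X Γ Δ (.cons (.node Y (Fml.box A ::ₘ Φ) Ψ ts) .nil)])
  /-- `R_4`. -/
  | r4 (C : NCtx) (X Y : Multiset ℕ) (Γ Δ Φ Ψ : Multiset Fml) (ts : NSeqs) (A : Fml) :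
      Ax.four ∈ L → C.holes = 1 →
      Step L [C.fill [.node X (Fml.box A ::ₘ Γ) Δ (.cons (.node Y (Fml.box A ::ₘ Φ) Ψ ts) .nil)]]
        (C.fill [.node X (Fml.box A ::ₘ Γ) Δ (.cons (.node Y Φ Ψ ts) .nil)])
  /-- `R_5`, with the side condition that the second hole has depth ≥ 1. -/
  | r5 (C : NCtx) (X Y : Multiset ℕ) (Γ Δ Φ Ψ : Multiset Fml) (A : Fml) :
      Ax.five ∈ L → (∃ d₁ d₂, C.holeDepths = [d₁, d₂] ∧ 1 ≤ d₂) →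
      Step L [C.fill [.node X (Fml.box A ::ₘ Γ) Δ .nil, .node Y (Fml.box A ::ₘ Φ) Ψ .nil]]
        (C.fill [.node X (Fml.box A ::ₘ Γ) Δ .nil, .node Y Φ Ψ .nil])
  /-- `R_cbf`. -/
  | rcbf (C : NCtx) (X Y : Multiset ℕ) (Γ Δ Φ Ψ : Multiset Fml) (ts : NSeqs) (x : ℕ) :
      Ax.cbf ∈ L → C.holes = 1 →
      Step L [C.fill [.node (x ::ₘ X) Γ Δ (.cons (.node (x ::ₘ Y) Φ Ψ ts) .nil)]]
        (C.fill [.node (x ::ₘ X) Γ Δ (.cons (.node Y Φ Ψ ts) .nil)])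
  /-- `R_bf`. -/
  | rbf (C : NCtx) (X Y : Multiset ℕ) (Γ Δ Φ Ψ : Multiset Fml) (ts : NSeqs) (x : ℕ) :
      Ax.bf ∈ L → C.holes = 1 →
      Step L [C.fill [.node (x ::ₘ X) Γ Δ (.cons (.node (x ::ₘ Y) Φ Ψ ts) .nil)]]
        (C.fill [.node X Γ Δ (.cons (.node (x ::ₘ Y) Φ Ψ ts) .nil)])
  /-- `R_ui`. -/
  | rui (C : NCtx) (X : Multiset ℕ) (Γ Δ : Multiset Fml) (x : ℕ) :
      Ax.ui ∈ L → C.holes = 1 →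
      Step L [C.fill [.node (x ::ₘ X) Γ Δ .nil]] (C.fill [.node X Γ Δ .nil])
  /-- `R_5dom`, present iff `5 ∈ L` and `{CBF, BF} ∩ L ≠ ∅`; both holes have depth ≥ 1. -/
  | r5dom (C : NCtx) (X Y : Multiset ℕ) (Γ Δ Φ Ψ : Multiset Fml) (x : ℕ) :
      Ax.five ∈ L → (Ax.cbf ∈ L ∨ Ax.bf ∈ L) →
      (∃ d₁ d₂, C.holeDepths = [d₁, d₂] ∧ 1 ≤ d₁ ∧ 1 ≤ d₂) →
      Step L [C.fill [.node (x ::ₘ X) Γ Δ .nil, .node (x ::ₘ Y) Φ Ψ .nil]]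
        (C.fill [.node (x ::ₘ X) Γ Δ .nil, .node Y Φ Ψ .nil])

/-- `Deriv L n S`: the nested sequent `S` is derivable in `NQ.L` with a derivation of
height at most `n`. -/
inductive Deriv (L : Set Ax) : ℕ → NSeq → Prop
  | step {n : ℕ} {ps : List NSeq} {S : NSeq} :
      Step L ps S → (∀ p ∈ ps, Deriv L n p) → Deriv L (n + 1) S

/-- `S` is `NQ.L`-derivable. -/
def Derivable (L : Set Ax) (S : NSeq) : Prop := ∃ n, Deriv L n S

end NQML

namespace NQML

/-! ## A de Bruijn copy of the language, used to reason about capture-avoiding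
substitution up to the concrete choice of bound variables. -/

inductive DFml : Type
  | drel : ℕ → List (ℕ ⊕ ℕ) → DFml
  | deq  : ℕ ⊕ ℕ → ℕ ⊕ ℕ → DFml
  | dbot : DFml
  | dimp : DFml → DFml → DFml
  | dall : DFml → DFml
  | dbox : DFml → DFml
  deriving DecidableEq

/-- Translation of a variable relative to a binder stack (innermost first). -/
def dvar : List ℕ → ℕ → ℕ ⊕ ℕ
  | [], v => .inl v
  | z :: ρ, v =>
      if v = z then .inr 0 else
      match dvar ρ v with
      | .inl w => .inl w
      | .inr i => .inr (i + 1)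

/-- Translation of a named formula to de Bruijn form relative to a binder stack. -/
def toDB : List ℕ → Fml → DFml
  | ρ, .rel n l => .drel n (l.map (dvar ρ))
  | ρ, .eq a b  => .deq (dvar ρ a) (dvar ρ b)
  | _, .bot     => .dbot
  | ρ, .imp A B => .dimp (toDB ρ A) (toDB ρ B)
  | ρ, .all z A => .dall (toDB (z :: ρ) A)
  | ρ, .box A   => .dbox (toDB ρ A)

def rv (σ : ℕ → ℕ) : ℕ ⊕ ℕ → ℕ ⊕ ℕ
  | .inl v => .inl (σ v)
  | .inr i => .inr i

/-- Renaming of the free names of a de Bruijn formula. -/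
def dbRen (σ : ℕ → ℕ) : DFml → DFml
  | .drel n l => .drel n (l.map (rv σ))
  | .deq a b  => .deq (rv σ a) (rv σ b)
  | .dbot     => .dbot
  | .dimp A B => .dimp (dbRen σ A) (dbRen σ B)
  | .dall A   => .dall (dbRen σ A)
  | .dbox A   => .dbox (dbRen σ A)

def av (z : ℕ) (d : ℕ) : ℕ ⊕ ℕ → ℕ ⊕ ℕ
  | .inl v => if v = z then .inr d else .inl v
  | .inr j => .inr j

/-- Abstraction of the free name `z` to the index `d` (at depth 0). -/
def dbAbs (z : ℕ) : ℕ → DFml → DFml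
  | d, .drel n l => .drel n (l.map (av z d))
  | d, .deq a b  => .deq (av z d a) (av z d b)
  | _, .dbot     => .dbot
  | d, .dimp A B => .dimp (dbAbs z d A) (dbAbs z d B)
  | d, .dall A   => .dall (dbAbs z (d + 1) A)
  | d, .dbox A   => .dbox (dbAbs z d A)

def iv (u : ℕ) (d : ℕ) : ℕ ⊕ ℕ → ℕ ⊕ ℕ
  | .inl v => .inl v
  | .inr j => if j = d then .inl u else .inr j

/-- Instantiation of the index `d` (at depth 0) by the free name `u`. -/
def dbInst (u : ℕ) : ℕ → DFml → DFml
  | d, .drel n l => .drel n (l.map (iv u d))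
  | d, .deq a b  => .deq (iv u d a) (iv u d b)
  | _, .dbot     => .dbot
  | d, .dimp A B => .dimp (dbInst u d A) (dbInst u d B)
  | d, .dall A   => .dall (dbInst u (d + 1) A)
  | d, .dbox A   => .dbox (dbInst u d A)

def fvv : ℕ ⊕ ℕ → Finset ℕ
  | .inl v => {v}
  | .inr _ => ∅

/-- Free names of a de Bruijn formula. -/
def dbFv : DFml → Finset ℕ
  | .drel _ l => l.foldr (fun a s => fvv a ∪ s) ∅
  | .deq a b  => fvv a ∪ fvv b
  | .dbot     => ∅
  | .dimp A B => dbFv A ∪ dbFv B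
  | .dall A   => dbFv A
  | .dbox A   => dbFv A

def ClosedV (d : ℕ) : ℕ ⊕ ℕ → Prop
  | .inl _ => True
  | .inr j => j < d

/-- All indices of the formula are `< d` (relative to local depth). -/
def Closed : ℕ → DFml → Prop
  | d, .drel _ l => ∀ a ∈ l, ClosedV d a
  | d, .deq a b  => ClosedV d a ∧ ClosedV d b
  | _, .dbot     => True
  | d, .dimp A B => Closed d A ∧ Closed d B
  | d, .dall A   => Closed (d + 1) A
  | d, .dbox A   => Closed d A

@[simp] lemma rv_id : ∀ a, rv id a = a
  | .inl _ => rfl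
  | .inr _ => rfl

@[simp] lemma dbRen_id (D : DFml) : dbRen id D = D := by
  induction D with
  | drel n l =>
      have : l.map (rv id) = l.map id := List.map_congr_left (fun a _ => rv_id a)
      simp [dbRen, this]
  | deq a b => simp [dbRen]
  | dbot => rfl
  | dimp A B ihA ihB => simp [dbRen, ihA, ihB]
  | dall A ih => simp [dbRen, ih]
  | dbox A ih => simp [dbRen, ih]

lemma rv_congr {σ τ : ℕ → ℕ} {a : ℕ ⊕ ℕ} (h : ∀ v ∈ fvv a, σ v = τ v) :
    rv σ a = rv τ a := by
  cases a with
  | inl v => simp [rv, h v (by simp [fvv])]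
  | inr i => rfl

lemma mem_foldr_fvv {l : List (ℕ ⊕ ℕ)} {a : ℕ ⊕ ℕ} (ha : a ∈ l) {v : ℕ} (hv : v ∈ fvv a) :
    v ∈ l.foldr (fun a s => fvv a ∪ s) ∅ := by
  induction l with
  | nil => cases ha
  | cons b l ih =>
      rcases List.mem_cons.1 ha with rfl | ha
      · exact Finset.mem_union_left _ hv
      · exact Finset.mem_union_right _ (ih ha)

lemma foldr_fvv_subset {l : List (ℕ ⊕ ℕ)} {s : Finset ℕ}
    (h : ∀ a ∈ l, fvv a ⊆ s) : l.foldr (fun a s => fvv a ∪ s) ∅ ⊆ s := by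
  induction l with
  | nil => simp
  | cons b l ih =>
      intro v hv
      rcases Finset.mem_union.1 hv with hv | hv
      · exact h b (List.mem_cons_self (a := b) (l := l)) hv
      · exact ih (fun a ha => h a (List.mem_cons_of_mem _ ha)) hv

lemma dbRen_congr {σ τ : ℕ → ℕ} : ∀ {D : DFml}, (∀ v ∈ dbFv D, σ v = τ v) →
    dbRen σ D = dbRen τ D := by
  intro D
  induction D with
  | drel n l =>
      intro h
      simp only [dbRen, DFml.drel.injEq, true_and]
      exact List.map_congr_left fun a ha =>
        rv_congr fun v hv => h v (mem_foldr_fvv ha hv)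
  | deq a b =>
      intro h
      simp only [dbRen, DFml.deq.injEq]
      constructor
      · exact rv_congr fun v hv => h v (by simp [dbFv, hv])
      · exact rv_congr fun v hv => h v (by simp [dbFv, hv])
  | dbot => intro _; rfl
  | dimp A B ihA ihB =>
      intro h
      simp only [dbRen, DFml.dimp.injEq]
      exact ⟨ihA fun v hv => h v (by simp [dbFv, hv]),
        ihB fun v hv => h v (by simp [dbFv, hv])⟩
  | dall A ih => intro h; simp only [dbRen, DFml.dall.injEq]; exact ih fun v hv => h v hv
  | dbox A ih => intro h; simp only [dbRen, DFml.dbox.injEq]; exact ih fun v hv => h v hv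

lemma dvar_not_mem {ρ : List ℕ} {v : ℕ} (h : v ∉ ρ) : dvar ρ v = .inl v := by
  induction ρ with
  | nil => rfl
  | cons z ρ ih =>
      have hvz : v ≠ z := fun e => h (e ▸ List.mem_cons_self (a := z) (l := ρ))
      have hnr : v ∉ ρ := fun e => h (List.mem_cons_of_mem _ e)
      simp [dvar, hvz, ih hnr]

lemma dvar_mem {ρ : List ℕ} {v : ℕ} (h : v ∈ ρ) :
    ∃ i, dvar ρ v = .inr i ∧ i < ρ.length := by
  induction ρ with
  | nil => cases h
  | cons z ρ ih =>
      by_cases hvz : v = z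
      · exact ⟨0, by simp [dvar, hvz], by simp⟩
      · rcases ih (by rcases List.mem_cons.1 h with h' | h'; exact absurd h' hvz; exact h') with
          ⟨i, hi, hlt⟩
        exact ⟨i + 1, by simp [dvar, hvz, hi], by simpa using Nat.succ_lt_succ hlt⟩

lemma fvv_dvar {ρ : List ℕ} {w v : ℕ} (hv : v ∈ fvv (dvar ρ w)) : v = w ∧ v ∉ ρ := by
  by_cases h : w ∈ ρ
  · rcases dvar_mem h with ⟨i, hi, _⟩
    rw [hi] at hv; cases hv
  · rw [dvar_not_mem h] at hv
    simp only [fvv, Finset.mem_singleton] at hv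
    exact ⟨hv, hv ▸ h⟩

lemma dbFv_toDB : ∀ (A : Fml) (ρ : List ℕ), dbFv (toDB ρ A) ⊆ A.fv \ ρ.toFinset := by
  intro A
  induction A with
  | rel n l =>
      intro ρ
      simp only [toDB, dbFv]
      apply foldr_fvv_subset
      intro a ha
      rcases List.mem_map.1 ha with ⟨w, hw, rfl⟩
      intro v hv
      obtain ⟨rfl, hnr⟩ := fvv_dvar hv
      simp only [Finset.mem_sdiff, List.mem_toFinset]
      exact ⟨by simpa [Fml.fv] using hw, hnr⟩
  | eq a b =>
      intro ρ v hv
      simp only [toDB, dbFv, Finset.mem_union] at hv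
      rcases hv with hv | hv <;> obtain ⟨rfl, hnr⟩ := fvv_dvar hv <;>
        simp [Fml.fv, Finset.mem_sdiff, hnr]
  | bot => intro ρ; simp [toDB, dbFv]
  | imp A B ihA ihB =>
      intro ρ v hv
      simp only [toDB, dbFv, Finset.mem_union] at hv
      rcases hv with hv | hv
      · have := ihA ρ hv
        simp only [Finset.mem_sdiff] at this ⊢
        exact ⟨by simp [Fml.fv, this.1], this.2⟩
      · have := ihB ρ hv
        simp only [Finset.mem_sdiff] at this ⊢
        exact ⟨by simp [Fml.fv, this.1], this.2⟩
  | all z A ih =>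
      intro ρ v hv
      have := ih (z :: ρ) hv
      simp only [Finset.mem_sdiff, List.toFinset_cons, Finset.mem_insert, List.mem_toFinset] at this
      push_neg at this
      simp only [Finset.mem_sdiff, Fml.fv, Finset.mem_erase, List.mem_toFinset]
      exact ⟨⟨this.2.1, this.1⟩, this.2.2⟩
  | box A ih =>
      intro ρ v hv
      exact ih ρ hv

end NQML
namespace NQML

lemma dvar_append (z : ℕ) : ∀ (ρ : List ℕ) (v : ℕ),
    dvar (ρ ++ [z]) v = av z ρ.length (dvar ρ v) := by
  intro ρ
  induction ρ with
  | nil =>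
      intro v
      by_cases h : v = z <;> simp [dvar, av, h]
  | cons w ρ ih =>
      intro v
      by_cases h : v = w
      · simp [dvar, av, h]
      · have ihv := ih v
        cases hv : dvar ρ v with
        | inl u =>
            have h1 : dvar (ρ ++ [z]) v = av z ρ.length (.inl u) := by rw [ihv, hv]
            by_cases hu : u = z
            · simp only [av, hu, if_pos rfl] at h1
              simp [dvar, h, h1, hv, av, hu]
            · simp only [av, if_neg hu] at h1
              simp [dvar, h, h1, hv, av, hu]
        | inr i =>
            have h1 : dvar (ρ ++ [z]) v = .inr i := by rw [ihv, hv]; rfl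
            simp [dvar, h, h1, hv, av]

lemma toDB_append (z : ℕ) : ∀ (A : Fml) (ρ : List ℕ),
    toDB (ρ ++ [z]) A = dbAbs z ρ.length (toDB ρ A) := by
  intro A
  induction A with
  | rel n l => intro ρ; simp [toDB, dbAbs, dvar_append]
  | eq a b => intro ρ; simp [toDB, dbAbs, dvar_append]
  | bot => intro ρ; rfl
  | imp A B ihA ihB => intro ρ; simp [toDB, dbAbs, ihA, ihB]
  | all w A ih =>
      intro ρ
      simp only [toDB, dbAbs, DFml.dall.injEq]
      have := ih (w :: ρ)
      simpa using this
  | box A ih => intro ρ; simp [toDB, dbAbs, ih]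

lemma closedV_dvar (ρ : List ℕ) (v : ℕ) : ClosedV ρ.length (dvar ρ v) := by
  by_cases h : v ∈ ρ
  · rcases dvar_mem h with ⟨i, hi, hlt⟩
    simp [hi, ClosedV, hlt]
  · simp [dvar_not_mem h, ClosedV]

lemma closed_toDB : ∀ (A : Fml) (ρ : List ℕ), Closed ρ.length (toDB ρ A) := by
  intro A
  induction A with
  | rel n l =>
      intro ρ
      simp only [toDB, Closed]
      intro a ha
      rcases List.mem_map.1 ha with ⟨w, _, rfl⟩
      exact closedV_dvar ρ w
  | eq a b => intro ρ; exact ⟨closedV_dvar ρ a, closedV_dvar ρ b⟩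
  | bot => intro ρ; trivial
  | imp A B ihA ihB => intro ρ; exact ⟨ihA ρ, ihB ρ⟩
  | all w A ih =>
      intro ρ
      simpa [toDB, Closed] using ih (w :: ρ)
  | box A ih => intro ρ; exact ih ρ

lemma iv_av {u z d : ℕ} {a : ℕ ⊕ ℕ} (h : ClosedV d a) :
    iv u d (av z d a) = rv (fun v => if v = z then u else v) a := by
  cases a with
  | inl v =>
      by_cases hv : v = z <;> simp [av, iv, rv, hv]
  | inr j =>
      simp only [ClosedV] at h
      simp [av, iv, rv, Nat.ne_of_lt h]

lemma dbInst_dbAbs (u z : ℕ) : ∀ (D : DFml) (d : ℕ), Closed d D →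
    dbInst u d (dbAbs z d D) = dbRen (fun v => if v = z then u else v) D := by
  intro D
  induction D with
  | drel n l =>
      intro d h
      simp only [dbAbs, dbInst, dbRen, List.map_map, DFml.drel.injEq, true_and]
      exact List.map_congr_left fun a ha => iv_av (h a ha)
  | deq a b => intro d h; simp [dbAbs, dbInst, dbRen, iv_av h.1, iv_av h.2]
  | dbot => intro d h; rfl
  | dimp A B ihA ihB => intro d h; simp [dbAbs, dbInst, dbRen, ihA d h.1, ihB d h.2]
  | dall A ih => intro d h; simp [dbAbs, dbInst, dbRen, ih (d+1) h]
  | dbox A ih => intro d h; simp [dbAbs, dbInst, dbRen, ih d h]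

lemma rv_iv (σ : ℕ → ℕ) (z d : ℕ) (a : ℕ ⊕ ℕ) :
    rv σ (iv z d a) = iv (σ z) d (rv σ a) := by
  cases a with
  | inl v => simp [iv, rv]
  | inr j => by_cases hj : j = d <;> simp [iv, rv, hj]

lemma dbRen_dbInst (σ : ℕ → ℕ) (z : ℕ) : ∀ (D : DFml) (d : ℕ),
    dbRen σ (dbInst z d D) = dbInst (σ z) d (dbRen σ D) := by
  intro D
  induction D with
  | drel n l => intro d; simp [dbInst, dbRen, List.map_map, rv_iv, Function.comp]
  | deq a b => intro d; simp [dbInst, dbRen, rv_iv]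
  | dbot => intro d; rfl
  | dimp A B ihA ihB => intro d; simp [dbInst, dbRen, ihA, ihB]
  | dall A ih => intro d; simp [dbInst, dbRen, ih]
  | dbox A ih => intro d; simp [dbInst, dbRen, ih]

/-- The master lemma: named capture-avoiding substitution corresponds, in de Bruijn
form, to a renaming of free names. -/
theorem toDB_substF : ∀ (A : Fml) (σ : ℕ → ℕ) (ρ ρ' : List ℕ),
    (∀ v ∈ A.fv, dvar ρ' (σ v) = rv σ (dvar ρ v)) →
    toDB ρ' (Fml.substF σ A) = dbRen σ (toDB ρ A) := by
  intro A
  induction A with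
  | rel n l =>
      intro σ ρ ρ' H
      simp only [Fml.substF, toDB, dbRen, List.map_map, DFml.drel.injEq, true_and]
      exact List.map_congr_left fun a ha => H a (by simp [Fml.fv, ha])
  | eq a b =>
      intro σ ρ ρ' H
      simp [Fml.substF, toDB, dbRen, H a (by simp [Fml.fv]), H b (by simp [Fml.fv])]
  | bot => intro σ ρ ρ' H; rfl
  | imp A B ihA ihB =>
      intro σ ρ ρ' H
      simp only [Fml.substF, toDB, dbRen, DFml.dimp.injEq]
      exact ⟨ihA σ ρ ρ' fun v hv => H v (by simp [Fml.fv, hv]),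
        ihB σ ρ ρ' fun v hv => H v (by simp [Fml.fv, hv])⟩
  | all z A ih =>
      intro σ ρ ρ' H
      simp only [Fml.substF, toDB, dbRen, DFml.dall.injEq]
      set captured := ((A.fv.erase z).image σ) with hcap
      set z' : ℕ := if z ∈ captured then captured.sup id + 1 else z with hz'
      have hz'cap : z' ∉ captured := by
        by_cases h : z ∈ captured
        · simp only [hz', if_pos h]
          intro hmem
          have h2 : (captured.sup id + 1 : ℕ) ≤ captured.sup id := Finset.le_sup (f := id) hmem
          omega
        · simpa [hz', if_neg h] using h
      have key : toDB (z' :: ρ') (Fml.substF (Function.update σ z z') A) =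
          dbRen (Function.update σ z z') (toDB (z :: ρ) A) := by
        apply ih
        intro v hv
        by_cases hvz : v = z
        · subst hvz
          simp [Function.update, dvar, rv]
        · have hσ : Function.update σ z z' v = σ v := Function.update_of_ne hvz _ _
          rw [hσ]
          have hne : σ v ≠ z' := by
            intro h
            exact hz'cap (h ▸ Finset.mem_image_of_mem σ (Finset.mem_erase.2 ⟨hvz, hv⟩))
          have H' := H v (by simp [Fml.fv, Finset.mem_erase, hvz, hv])
          simp only [dvar, hne, if_false, hvz, if_false]
          rw [H']
          cases hd : dvar ρ v with
          | inl w =>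
              have : v ∉ ρ := by
                intro hm; rcases dvar_mem hm with ⟨i, hi, _⟩; rw [hi] at hd; cases hd
              rw [dvar_not_mem this] at hd
              cases hd
              simp [rv, hσ]
          | inr i => simp [rv]
      rw [key]
      apply dbRen_congr
      intro v hv
      have := dbFv_toDB A (z :: ρ) hv
      simp only [Finset.mem_sdiff, List.toFinset_cons, Finset.mem_insert, List.mem_toFinset] at this
      push_neg at this
      exact Function.update_of_ne this.2.1 _ _
  | box A ih =>
      intro σ ρ ρ' H
      simp only [Fml.substF, toDB, dbRen, DFml.dbox.injEq]
      exact ih σ ρ ρ' H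

end NQML
namespace NQML

/-! ## The α-renaming relation on formulas -/

/-- `B` is the result of applying the renaming `σ` to `A`, up to α-equivalence. -/
def FRel (σ : ℕ → ℕ) (A B : Fml) : Prop := toDB [] B = dbRen σ (toDB [] A)

lemma FRel_refl (A : Fml) : FRel id A A := by simp [FRel]

lemma FRel.congr {σ τ : ℕ → ℕ} {A B : Fml} (hAB : FRel σ A B)
    (h : ∀ v ∈ A.fv, σ v = τ v) : FRel τ A B := by
  rw [FRel, hAB]
  exact dbRen_congr fun v hv => by
    have := dbFv_toDB A [] hv
    simp only [List.toFinset_nil, Finset.sdiff_empty] at this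
    exact h v this

lemma FRel_substF (σ : ℕ → ℕ) (A : Fml) : FRel σ A (Fml.substF σ A) :=
  toDB_substF A σ [] [] (fun v _ => rfl)

lemma toDB_nil_inj_aux (l l' : List ℕ) (h : l.map (dvar []) = l'.map (dvar [])) : l = l' := by
  have : Function.Injective (dvar ([] : List ℕ)) := by
    intro a b hab
    simpa [dvar] using hab
  exact List.map_injective_iff.2 this h

lemma FRel_bot {σ : ℕ → ℕ} {B : Fml} (h : FRel σ .bot B) : B = .bot := by
  cases B <;> simp [FRel, toDB, dbRen] at h <;> rfl

lemma FRel_rel {σ : ℕ → ℕ} {n : ℕ} {l : List ℕ} {B : Fml} (h : FRel σ (.rel n l) B) :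
    B = .rel n (l.map σ) := by
  cases B <;> simp only [FRel, toDB, dbRen, List.map_map] at h
  case rel m l' =>
    obtain ⟨rfl, hl⟩ := by simpa using h
    congr 1
    have : ∀ a ∈ l, (rv σ ∘ dvar []) a = dvar [] (σ a) := fun a _ => rfl
    rw [List.map_congr_left this] at hl
    have hl2 : List.map (dvar []) l' = List.map (dvar []) (l.map σ) := by
      rw [List.map_map]; exact hl
    exact toDB_nil_inj_aux _ _ hl2
  all_goals cases h

lemma FRel_eq {σ : ℕ → ℕ} {a b : ℕ} {B : Fml} (h : FRel σ (.eq a b) B) :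
    B = .eq (σ a) (σ b) := by
  cases B <;> simp only [FRel, toDB, dbRen] at h
  case eq c d =>
    obtain ⟨h1, h2⟩ := by simpa using h
    simp [dvar, rv] at h1 h2
    simp [h1, h2]
  all_goals cases h

lemma FRel_imp {σ : ℕ → ℕ} {A₁ A₂ : Fml} {B : Fml} (h : FRel σ (.imp A₁ A₂) B) :
    ∃ B₁ B₂, B = .imp B₁ B₂ ∧ FRel σ A₁ B₁ ∧ FRel σ A₂ B₂ := by
  cases B <;> simp only [FRel, toDB, dbRen] at h
  case imp B₁ B₂ =>
    obtain ⟨h1, h2⟩ := by simpa using h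
    exact ⟨B₁, B₂, rfl, h1, h2⟩
  all_goals cases h

lemma FRel_box {σ : ℕ → ℕ} {A : Fml} {B : Fml} (h : FRel σ (.box A) B) :
    ∃ B₁, B = .box B₁ ∧ FRel σ A B₁ := by
  cases B <;> simp only [FRel, toDB, dbRen] at h
  case box B₁ =>
    obtain h1 := by simpa using h
    exact ⟨B₁, rfl, h1⟩
  all_goals cases h

lemma FRel_all {σ : ℕ → ℕ} {x : ℕ} {A : Fml} {B : Fml} (h : FRel σ (.all x A) B) :
    ∃ x' B₁, B = .all x' B₁ ∧ toDB [x'] B₁ = dbRen σ (toDB [x] A) := by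
  cases B <;> simp only [FRel, toDB, dbRen] at h
  case all x' B₁ =>
    obtain h1 := by simpa using h
    exact ⟨x', B₁, rfl, h1⟩
  all_goals cases h

lemma FRel.atomic {σ : ℕ → ℕ} {P B : Fml} (hP : P.Atomic) (h : FRel σ P B) :
    B = Fml.substF σ P ∧ B.Atomic := by
  cases P with
  | rel n l => rw [FRel_rel h]; exact ⟨rfl, trivial⟩
  | eq a b => rw [FRel_eq h]; exact ⟨rfl, trivial⟩
  | bot => cases hP
  | imp A B => cases hP
  | all z A => cases hP
  | box A => cases hP

/-- The de Bruijn form of a single substitution. -/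
lemma toDB_sub (A : Fml) (y x : ℕ) :
    toDB [] (A.sub y x) = dbInst y 0 (toDB [x] A) := by
  have h2 : toDB [x] A = dbAbs x 0 (toDB [] A) := by
    have := toDB_append x A []
    simpa using this
  rw [h2, dbInst_dbAbs y x _ 0 (by simpa using closed_toDB A [])]
  exact toDB_substF A _ [] [] (fun v _ => rfl)

/-- Transport of `L∀` instances along a renaming. -/
lemma FRel_sub_allL {σ : ℕ → ℕ} {x x' : ℕ} {A A' : Fml}
    (h : toDB [x'] A' = dbRen σ (toDB [x] A)) (z : ℕ) :
    FRel σ (A.sub z x) (A'.sub (σ z) x') := by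
  rw [FRel, toDB_sub, toDB_sub, h, dbRen_dbInst]

/-- Transport of `R∀` instances along a renaming, replacing the eigenvariable. -/
lemma FRel_sub_allR {σ : ℕ → ℕ} {x x' : ℕ} {A A' : Fml} {y u : ℕ}
    (h : toDB [x'] A' = dbRen σ (toDB [x] A)) (hy : y ∉ (Fml.all x A).fv) :
    FRel (Function.update σ y u) (A.sub y x) (A'.sub u x') := by
  rw [FRel, toDB_sub, toDB_sub, h, dbRen_dbInst, Function.update_self]
  congr 1
  apply dbRen_congr
  intro v hv
  have h3 := dbFv_toDB A [x] hv
  rw [Finset.mem_sdiff] at h3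
  have hvy : v ≠ y := by
    intro e
    subst e
    exact hy (Finset.mem_erase.2 ⟨by simpa using h3.2, h3.1⟩)
  exact (Function.update_of_ne hvy _ _).symm

lemma fresh_list (s : List ℕ) : ∀ v ∈ s, v ≠ s.foldr max 0 + 1 := by
  have : ∀ v ∈ s, v ≤ s.foldr max 0 := by
    induction s with
    | nil => simp
    | cons a s ih =>
        intro v hv
        rcases List.mem_cons.1 hv with rfl | hv
        · simp [List.foldr]
        · exact le_trans (ih v hv) (by simp [List.foldr])
  intro v hv
  have := this v hv
  omega

/-- The helper needed for transporting `Repl` instances: a common atomic pattern. -/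
lemma atomic_subst_pair (σ : ℕ → ℕ) (x y z : ℕ) (P : Fml) (hP : P.Atomic) :
    ∃ (P' : Fml) (z' : ℕ), P'.Atomic ∧ P'.sub (σ x) z' = Fml.substF σ (P.sub x z) ∧
      P'.sub (σ y) z' = Fml.substF σ (P.sub y z) := by
  cases P with
  | rel n l =>
      refine ⟨.rel n (l.map fun v => if v = z then (l.map σ).foldr max 0 + 1 else σ v),
        (l.map σ).foldr max 0 + 1, trivial, ?_, ?_⟩ <;>
      · show Fml.rel _ _ = Fml.rel _ _
        simp only [Fml.sub, Fml.substF, List.map_map, Fml.rel.injEq, true_and]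
        apply List.map_congr_left
        intro a ha
        by_cases haz : a = z
        · simp [haz, Function.comp]
        · have : σ a ≠ (l.map σ).foldr max 0 + 1 :=
            fresh_list _ _ (List.mem_map.2 ⟨a, ha, rfl⟩)
          simp [haz, Function.comp, this]
  | eq a b =>
      refine ⟨.eq (if a = z then max (σ a) (σ b) + 1 else σ a)
          (if b = z then max (σ a) (σ b) + 1 else σ b), max (σ a) (σ b) + 1, trivial, ?_, ?_⟩ <;>
      · show Fml.eq _ _ = Fml.eq _ _
        have h1 : σ a ≠ max (σ a) (σ b) + 1 := by omega
        have h2 : σ b ≠ max (σ a) (σ b) + 1 := by omega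
        by_cases haz : a = z <;> by_cases hbz : b = z <;>
          simp [Fml.sub, Fml.substF, haz, hbz, h1, h2] <;> omega
  | bot => cases hP
  | imp A B => cases hP
  | all w A => cases hP
  | box A => cases hP

end NQML
namespace NQML

/-! ## The signature-edit relation -/

/-- `W` is obtained from `M` by adding/removing copies of `x`, keeping `x` present
if it was present. -/
def rx (x : ℕ) (M W : Multiset ℕ) : Prop :=
  M.filter (· ≠ x) = W.filter (· ≠ x) ∧ (x ∈ M → x ∈ W)

lemma rx_refl (x : ℕ) (M : Multiset ℕ) : rx x M M := ⟨rfl, id⟩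

lemma rx_add {x : ℕ} {M W N V : Multiset ℕ} (h1 : rx x M W) (h2 : rx x N V) :
    rx x (M + N) (W + V) := by
  refine ⟨by rw [Multiset.filter_add, Multiset.filter_add, h1.1, h2.1], fun h => ?_⟩
  rcases Multiset.mem_add.1 h with h | h
  · exact Multiset.mem_add.2 (Or.inl (h1.2 h))
  · exact Multiset.mem_add.2 (Or.inr (h2.2 h))

lemma rx_add_left {x : ℕ} (K : Multiset ℕ) {N V : Multiset ℕ} (h : rx x N V) :
    rx x (K + N) (K + V) := rx_add (rx_refl x K) h

lemma rx_cons {x : ℕ} (a : ℕ) {N V : Multiset ℕ} (h : rx x N V) :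
    rx x (a ::ₘ N) (a ::ₘ V) := by
  rw [← Multiset.singleton_add, ← Multiset.singleton_add a V]
  exact rx_add_left _ h

lemma rx_mem {x : ℕ} {M W : Multiset ℕ} (h : rx x M W) {v : ℕ} (hv : v ∈ M) : v ∈ W := by
  by_cases hvx : v = x
  · exact hvx ▸ h.2 (hvx ▸ hv)
  · have : v ∈ M.filter (· ≠ x) := Multiset.mem_filter.2 ⟨hv, hvx⟩
    rw [h.1] at this
    exact Multiset.mem_of_mem_filter this

lemma filter_count_decomp (x : ℕ) (s : Multiset ℕ) :
    s.filter (· ≠ x) + Multiset.replicate (s.count x) x = s := by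
  have := Multiset.filter_add_not (fun v => v ≠ x) s
  have h2 : s.filter (fun v => ¬ v ≠ x) = s.filter (fun v => v = x) := by
    apply Multiset.filter_congr
    intro v _
    constructor
    · intro h; by_contra h'; exact h h'
    · intro h; intro h'; exact h' h
  rw [h2, Multiset.filter_eq'] at this
  exact this

/-- Splitting the target of an `rx`-edit along a sum, giving the second summand
priority for the copies of `x`. -/
lemma rx_split {x : ℕ} {M N W : Multiset ℕ} (h : rx x (M + N) W) :
    ∃ W₁ W₂, W = W₁ + W₂ ∧ (∀ v ∈ N, v ∈ W₂) := by
  classical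
  set k := min (N.count x) (W.count x) with hk
  refine ⟨M.filter (· ≠ x) + Multiset.replicate (W.count x - k) x,
    N.filter (· ≠ x) + Multiset.replicate k x, ?_, ?_⟩
  · have hW := filter_count_decomp x W
    have hMN : W.filter (· ≠ x) = M.filter (· ≠ x) + N.filter (· ≠ x) := by
      rw [← Multiset.filter_add, ← h.1]
    have hrep : Multiset.replicate (W.count x - k) x + Multiset.replicate k x =
        Multiset.replicate (W.count x) x := by
      rw [← Multiset.replicate_add]
      congr 1
      omega
    calc W = W.filter (· ≠ x) + Multiset.replicate (W.count x) x := (filter_count_decomp x W).symm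
    _ = M.filter (· ≠ x) + Multiset.replicate (W.count x - k) x +
          (N.filter (· ≠ x) + Multiset.replicate k x) := by
        rw [hMN, ← hrep, add_add_add_comm]
  · intro v hv
    by_cases hvx : v = x
    · subst hvx
      have hNc : 1 ≤ N.count v := Multiset.one_le_count_iff_mem.2 hv
      have hWm : v ∈ W := rx_mem h (Multiset.mem_add.2 (Or.inr hv))
      have hWc : 1 ≤ W.count v := Multiset.one_le_count_iff_mem.2 hWm
      have : 1 ≤ k := le_min hNc hWc
      exact Multiset.mem_add.2 (Or.inr (Multiset.mem_replicate.2 ⟨by omega, rfl⟩))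
    · exact Multiset.mem_add.2 (Or.inl (Multiset.mem_filter.2 ⟨hv, hvx⟩))

/-! ## The sequent-level edit relation -/

/-- Pointwise relation on formula multisets. -/
def MRel (σ : ℕ → ℕ) : Multiset Fml → Multiset Fml → Prop := Multiset.Rel (FRel σ)

mutual
  /-- `T` is obtained from `S` by renaming along `σ` (up to α) and editing copies of
  `x` in the signatures. -/
  inductive SRel (x : ℕ) (σ : ℕ → ℕ) : NSeq → NSeq → Prop
    | node {X X' : Multiset ℕ} {Γ Γ' Δ Δ' : Multiset Fml} {cs cs' : NSeqs} :
        rx x (X.map σ) X' → MRel σ Γ Γ' → MRel σ Δ Δ' → SRels x σ cs cs' →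
        SRel x σ (.node X Γ Δ cs) (.node X' Γ' Δ' cs')
  /-- Lists version of `SRel`. -/
  inductive SRels (x : ℕ) (σ : ℕ → ℕ) : NSeqs → NSeqs → Prop
    | nil : SRels x σ .nil .nil
    | cons {s s' : NSeq} {ss ss' : NSeqs} :
        SRel x σ s s' → SRels x σ ss ss' → SRels x σ (.cons s ss) (.cons s' ss')
end

lemma MRel.add {σ : ℕ → ℕ} {Γ Γ' Δ Δ' : Multiset Fml} (h1 : MRel σ Γ Γ')
    (h2 : MRel σ Δ Δ') : MRel σ (Γ + Δ) (Γ' + Δ') := Multiset.Rel.add h1 h2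

lemma MRel.cons {σ : ℕ → ℕ} {A A' : Fml} {Γ Γ' : Multiset Fml} (h1 : FRel σ A A')
    (h2 : MRel σ Γ Γ') : MRel σ (A ::ₘ Γ) (A' ::ₘ Γ') := Multiset.Rel.cons h1 h2

lemma MRel.zero (σ : ℕ → ℕ) : MRel σ 0 0 := Multiset.Rel.zero

lemma MRel.refl (Γ : Multiset Fml) : MRel id Γ Γ := by
  induction Γ using Multiset.induction with
  | empty => exact MRel.zero id
  | cons A Γ ih => exact MRel.cons (FRel_refl A) ih

theorem SRels.append {x : ℕ} {σ : ℕ → ℕ} :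
    ∀ {cs : NSeqs} {cs' ds ds' : NSeqs},
    SRels x σ cs cs' → SRels x σ ds ds' → SRels x σ (cs ++ ds) (cs' ++ ds')
  | .nil, _, _, _, h1, h2 => by cases h1; exact h2
  | .cons s ss, _, _, _, h1, h2 => by
      cases h1 with
      | cons h hs => exact SRels.cons h (SRels.append hs h2)

lemma SRel.merge {x : ℕ} {σ : ℕ → ℕ} {S S' T T' : NSeq} (h1 : SRel x σ S S')
    (h2 : SRel x σ T T') : SRel x σ (S.merge T) (S'.merge T') := by
  cases h1 with
  | node ha hb hc hd =>
    cases h2 with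
    | node he hf hg hh =>
      rw [NSeq.merge, NSeq.merge]
      exact SRel.node (by rw [Multiset.map_add]; exact rx_add ha he)
        (MRel.add hb hf) (MRel.add hc hg) (SRels.append hd hh)

end NQML
namespace NQML

/-! ## Free-variable lemmas for nested sequents -/

lemma msFv_add (Γ Δ : Multiset Fml) : msFv (Γ + Δ) = msFv Γ ∪ msFv Δ := by
  simp [msFv, Multiset.map_add, Multiset.sup_add]

lemma msFv_cons (A : Fml) (Γ : Multiset Fml) : msFv (A ::ₘ Γ) = A.fv ∪ msFv Γ := by
  simp [msFv, Multiset.map_cons, Multiset.sup_cons]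

lemma fv_subset_msFv {A : Fml} {Γ : Multiset Fml} (h : A ∈ Γ) : A.fv ⊆ msFv Γ :=
  Finset.le_iff_subset.1 (Multiset.le_sup (Multiset.mem_map_of_mem _ h))

theorem NSeqs.fv_append : ∀ (cs ds : NSeqs), (cs ++ ds).fv = cs.fv ∪ ds.fv
  | .nil, ds => by
      show (NSeqs.append .nil ds).fv = _
      simp [NSeqs.append, NSeqs.fv]
  | .cons s ss, ds => by
      show NSeqs.fv (NSeqs.append (.cons s ss) ds) = _
      rw [show NSeqs.append (.cons s ss) ds = .cons s (NSeqs.append ss ds) from rfl]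
      simp only [NSeqs.fv]
      rw [show NSeqs.append ss ds = ss ++ ds from rfl, NSeqs.fv_append ss ds,
        Finset.union_assoc]

lemma NSeq.fv_merge (S T : NSeq) : (S.merge T).fv = S.fv ∪ T.fv := by
  cases S with
  | node X Γ Δ cs =>
    cases T with
    | node Y Φ Ψ ds =>
      show NSeq.fv (.node (X + Y) (Γ + Φ) (Δ + Ψ) (cs ++ ds)) = _
      simp only [NSeq.fv, Multiset.toFinset_add, msFv_add, NSeqs.fv_append]
      ext v
      simp only [Finset.mem_union]
      tauto

lemma NSeq.fv_foldl_merge : ∀ (l : List NSeq) (b : NSeq),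
    (l.foldl NSeq.merge b).fv = b.fv ∪ l.foldr (fun s acc => s.fv ∪ acc) ∅
  | [], b => by simp
  | s :: l, b => by
      rw [List.foldl_cons, NSeq.fv_foldl_merge l (b.merge s), NSeq.fv_merge]
      simp only [List.foldr_cons]
      ext v
      simp only [Finset.mem_union]
      tauto

/-! ## Congruence of `SRel` in the renaming -/

section congrσ

variable {x : ℕ} {σ τ : ℕ → ℕ}

mutual
theorem SRel.congrσ : ∀ {S T : NSeq}, SRel x σ S T →
    (∀ v ∈ S.fv, σ v = τ v) → SRel x τ S T
  | .node X Γ Δ cs, _, h, hag => by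
      cases h with
      | node h1 h2 h3 h4 =>
          have hX : X.map τ = X.map σ :=
            Multiset.map_congr rfl fun v hv =>
              (hag v (by simp [NSeq.fv, Multiset.mem_toFinset, hv])).symm
          refine SRel.node (hX ▸ h1) ?_ ?_ (SRels.congrσ h4 ?_)
          · exact Multiset.Rel.mono h2 fun A hA B _ hAB =>
              hAB.congr fun v hv => hag v (by
                simp only [NSeq.fv, Finset.mem_union]
                exact Or.inl (Or.inl (Or.inr (fv_subset_msFv hA hv))))
          · exact Multiset.Rel.mono h3 fun A hA B _ hAB =>
              hAB.congr fun v hv => hag v (by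
                simp only [NSeq.fv, Finset.mem_union]
                exact Or.inl (Or.inr (fv_subset_msFv hA hv)))
          · intro v hv
            exact hag v (by simp only [NSeq.fv, Finset.mem_union]; exact Or.inr hv)

theorem SRels.congrσ : ∀ {ss ts : NSeqs}, SRels x σ ss ts →
    (∀ v ∈ ss.fv, σ v = τ v) → SRels x τ ss ts
  | .nil, _, h, _ => by cases h; exact SRels.nil
  | .cons s ss, _, h, hag => by
      cases h with
      | cons h1 h2 =>
          refine SRels.cons (SRel.congrσ h1 ?_) (SRels.congrσ h2 ?_) <;>
            intro v hv <;> apply hag v <;> simp only [NSeqs.fv, Finset.mem_union]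
          · exact Or.inl hv
          · exact Or.inr hv
end

end congrσ

/-! ## Reflexivity and congruence under filling -/

mutual
theorem SRel.refl (x : ℕ) : ∀ (S : NSeq), SRel x id S S
  | .node X Γ Δ cs =>
      SRel.node (by rw [Multiset.map_id]; exact rx_refl x X) (MRel.refl Γ) (MRel.refl Δ)
        (SRels.refl x cs)

theorem SRels.refl (x : ℕ) : ∀ (ss : NSeqs), SRels x id ss ss
  | .nil => SRels.nil
  | .cons s ss => SRels.cons (SRel.refl x s) (SRels.refl x ss)
end

lemma SRel_foldl_merge {x : ℕ} {σ : ℕ → ℕ} :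
    ∀ {l l' : List NSeq} {b b' : NSeq}, List.Forall₂ (SRel x σ) l l' → SRel x σ b b' →
      SRel x σ (l.foldl NSeq.merge b) (l'.foldl NSeq.merge b') := by
  intro l
  induction l with
  | nil =>
      intro l' b b' h hb
      cases h
      exact hb
  | cons s l ih =>
      intro l' b b' h hb
      cases h with
      | cons h1 h2 =>
          simp only [List.foldl_cons]
          exact ih h2 (hb.merge h1)

mutual
theorem NCtx.fill_srel (x : ℕ) : ∀ (c : NCtx) {L L' : List NSeq},
    List.Forall₂ (SRel x id) L L' → SRel x id (c.fill L) (c.fill L')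
  | .node X Γ Δ k cs, L, L', h => by
      show SRel x id ((L.take k).foldl NSeq.merge (.node X Γ Δ (NCtxs.fill cs (L.drop k))))
        ((L'.take k).foldl NSeq.merge (.node X Γ Δ (NCtxs.fill cs (L'.drop k))))
      refine SRel_foldl_merge (List.forall₂_take k h) ?_
      exact SRel.node (by rw [Multiset.map_id]; exact rx_refl x X) (MRel.refl Γ) (MRel.refl Δ)
        (NCtxs.fill_srels x cs (List.forall₂_drop k h))

theorem NCtxs.fill_srels (x : ℕ) : ∀ (cs : NCtxs) {L L' : List NSeq},
    List.Forall₂ (SRel x id) L L' → SRels x id (NCtxs.fill cs L) (NCtxs.fill cs L')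
  | .nil, L, L', _ => by
      show SRels x id .nil .nil
      exact SRels.nil
  | .cons c cs, L, L', h => by
      show SRels x id (.cons (NCtx.fill c (L.take (NCtx.holes c)))
          (NCtxs.fill cs (L.drop (NCtx.holes c))))
        (.cons (NCtx.fill c (L'.take (NCtx.holes c)))
          (NCtxs.fill cs (L'.drop (NCtx.holes c))))
      exact SRels.cons (NCtx.fill_srel x c (List.forall₂_take _ h))
        (NCtxs.fill_srels x cs (List.forall₂_drop _ h))
end

end NQML
namespace NQML

/-! ## Context helpers -/

mutual
  /-- A nested sequent regarded as a hole-less context. -/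
  def toCtx : NSeq → NCtx
    | .node X Γ Δ cs => .node X Γ Δ 0 (toCtxs cs)
  def toCtxs : NSeqs → NCtxs
    | .nil => .nil
    | .cons s ss => .cons (toCtx s) (toCtxs ss)
end

mutual
  theorem holes_toCtx : ∀ (s : NSeq), (toCtx s).holes = 0
    | .node X Γ Δ cs => by
        show 0 + (toCtxs cs).holes = 0
        rw [holes_toCtxs cs]
  theorem holes_toCtxs : ∀ (ss : NSeqs), (toCtxs ss).holes = 0
    | .nil => rfl
    | .cons s ss => by
        show (toCtx s).holes + (toCtxs ss).holes = 0
        rw [holes_toCtx s, holes_toCtxs ss]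
end

mutual
  theorem holeDepths_toCtx : ∀ (s : NSeq), (toCtx s).holeDepths = []
    | .node X Γ Δ cs => by
        show List.replicate 0 0 ++ ((toCtxs cs).holeDepths).map (· + 1) = []
        rw [holeDepths_toCtxs cs]
        rfl
  theorem holeDepths_toCtxs : ∀ (ss : NSeqs), (toCtxs ss).holeDepths = []
    | .nil => rfl
    | .cons s ss => by
        show (toCtx s).holeDepths ++ (toCtxs ss).holeDepths = []
        rw [holeDepths_toCtx s, holeDepths_toCtxs ss]
        rfl
end

mutual
  theorem fill_toCtx : ∀ (s : NSeq) (L : List NSeq), (toCtx s).fill L = s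
    | .node X Γ Δ cs, L => by
        show (L.take 0).foldl NSeq.merge (.node X Γ Δ ((toCtxs cs).fill (L.drop 0))) = _
        rw [List.take_zero, List.foldl_nil, List.drop_zero, fill_toCtxs cs L]
  theorem fill_toCtxs : ∀ (ss : NSeqs) (L : List NSeq), (toCtxs ss).fill L = ss
    | .nil, L => rfl
    | .cons s ss, L => by
        show NSeqs.cons ((toCtx s).fill (L.take (toCtx s).holes))
          ((toCtxs ss).fill (L.drop (toCtx s).holes)) = _
        rw [fill_toCtx s, fill_toCtxs ss]
end

mutual
  theorem holeDepths_length : ∀ (c : NCtx), c.holeDepths.length = c.holes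
    | .node X Γ Δ k cs => by
        show (List.replicate k 0 ++ ((NCtxs.holeDepths cs).map (· + 1))).length = k + cs.holes
        rw [List.length_append, List.length_replicate, List.length_map, holeDepths_lengths cs]
  theorem holeDepths_lengths : ∀ (cs : NCtxs), cs.holeDepths.length = cs.holes
    | .nil => rfl
    | .cons c cs => by
        show (c.holeDepths ++ cs.holeDepths).length = c.holes + cs.holes
        rw [List.length_append, holeDepths_length c, holeDepths_lengths cs]
end

theorem holeDepths_nil_of_holes_zero {c : NCtx} (h : c.holes = 0) : c.holeDepths = [] :=
  List.eq_nil_of_length_eq_zero (by rw [holeDepths_length, h])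

theorem holeDepths_nils_of_holes_zero {cs : NCtxs} (h : cs.holes = 0) : cs.holeDepths = [] :=
  List.eq_nil_of_length_eq_zero (by rw [holeDepths_lengths, h])

/-- Splitting an `SRels` along an append. -/
theorem srels_append_split {x : ℕ} {σ : ℕ → ℕ} :
    ∀ {cs : NSeqs} {ds ts : NSeqs}, SRels x σ (cs ++ ds) ts →
      ∃ ts₁ ts₂, ts = ts₁ ++ ts₂ ∧ SRels x σ cs ts₁ ∧ SRels x σ ds ts₂
  | .nil, ds, ts, h => ⟨.nil, ts, rfl, SRels.nil, h⟩
  | .cons s ss, ds, ts, h => by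
      have h' : SRels x σ (.cons s (ss ++ ds)) ts := h
      cases h' with
      | cons h1 h2 =>
          obtain ⟨ts₁, ts₂, rfl, ha, hb⟩ := srels_append_split h2
          exact ⟨.cons _ ts₁, ts₂, rfl, SRels.cons h1 ha, hb⟩

end NQML
namespace NQML

/-! ## Transfer of context decompositions along `SRel` -/

lemma MRel.congrσ {σ τ : ℕ → ℕ} {Γ Γ' : Multiset Fml} (h : MRel σ Γ Γ')
    (hag : ∀ v ∈ msFv Γ, σ v = τ v) : MRel τ Γ Γ' :=
  Multiset.Rel.mono h fun A hA B _ hAB => hAB.congr fun v hv => hag v (fv_subset_msFv hA hv)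

lemma map_congrσ {X : Multiset ℕ} {σ τ : ℕ → ℕ} (hag : ∀ v ∈ X.toFinset, σ v = τ v) :
    X.map σ = X.map τ :=
  Multiset.map_congr rfl fun v hv => hag v (Multiset.mem_toFinset.2 hv)

/-- Rebuild clause for one-hole transfer at `NSeq` level. -/
def Reb1 (x : ℕ) (σ : ℕ → ℕ) (c c' : NCtx) (X₁ X₁' : Multiset ℕ)
    (Γ₁ Δ₁ : Multiset Fml) (cs₁ : NSeqs) : Prop :=
  ∀ (σ₂ : ℕ → ℕ), (∀ v ∈ (c.fill [.node X₁ Γ₁ Δ₁ cs₁]).fv, σ₂ v = σ v) →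
    ∀ (E : Multiset ℕ) (Γ₂ Δ₂ : Multiset Fml) (cs₂ : NSeqs)
      (Γ₂' Δ₂' : Multiset Fml) (cs₂' : NSeqs),
      MRel σ₂ Γ₂ Γ₂' → MRel σ₂ Δ₂ Δ₂' → SRels x σ₂ cs₂ cs₂' →
      SRel x σ₂ (c.fill [.node (E + X₁) Γ₂ Δ₂ cs₂])
        (c'.fill [.node (E.map σ₂ + X₁') Γ₂' Δ₂' cs₂'])

/-- Output of one-hole transfer at `NSeq` level. -/
def Out1 (x : ℕ) (σ : ℕ → ℕ) (c : NCtx) (X₁ : Multiset ℕ) (Γ₁ Δ₁ : Multiset Fml)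
    (cs₁ : NSeqs) (T : NSeq) : Prop :=
  ∃ c' X₁' Γ₁' Δ₁' cs₁', c'.holes = 1 ∧ c'.holeDepths = c.holeDepths ∧
    T = c'.fill [.node X₁' Γ₁' Δ₁' cs₁'] ∧ MRel σ Γ₁ Γ₁' ∧ MRel σ Δ₁ Δ₁' ∧
    SRels x σ cs₁ cs₁' ∧ (∀ v ∈ X₁, σ v ∈ X₁') ∧ Reb1 x σ c c' X₁ X₁' Γ₁ Δ₁ cs₁

/-- Rebuild clause for one-hole transfer at `NSeqs` level. -/
def Reb1s (x : ℕ) (σ : ℕ → ℕ) (cs cs' : NCtxs) (X₁ X₁' : Multiset ℕ)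
    (Γ₁ Δ₁ : Multiset Fml) (cs₁ : NSeqs) : Prop :=
  ∀ (σ₂ : ℕ → ℕ), (∀ v ∈ (NCtxs.fill cs [.node X₁ Γ₁ Δ₁ cs₁]).fv, σ₂ v = σ v) →
    ∀ (E : Multiset ℕ) (Γ₂ Δ₂ : Multiset Fml) (cs₂ : NSeqs)
      (Γ₂' Δ₂' : Multiset Fml) (cs₂' : NSeqs),
      MRel σ₂ Γ₂ Γ₂' → MRel σ₂ Δ₂ Δ₂' → SRels x σ₂ cs₂ cs₂' →
      SRels x σ₂ (NCtxs.fill cs [.node (E + X₁) Γ₂ Δ₂ cs₂])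
        (NCtxs.fill cs' [.node (E.map σ₂ + X₁') Γ₂' Δ₂' cs₂'])

/-- Output of one-hole transfer at `NSeqs` level. -/
def Out1s (x : ℕ) (σ : ℕ → ℕ) (cs : NCtxs) (X₁ : Multiset ℕ) (Γ₁ Δ₁ : Multiset Fml)
    (cs₁ : NSeqs) (ts : NSeqs) : Prop :=
  ∃ cs' X₁' Γ₁' Δ₁' cs₁', NCtxs.holes cs' = 1 ∧ NCtxs.holeDepths cs' = NCtxs.holeDepths cs ∧
    ts = NCtxs.fill cs' [.node X₁' Γ₁' Δ₁' cs₁'] ∧ MRel σ Γ₁ Γ₁' ∧ MRel σ Δ₁ Δ₁' ∧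
    SRels x σ cs₁ cs₁' ∧ (∀ v ∈ X₁, σ v ∈ X₁') ∧ Reb1s x σ cs cs' X₁ X₁' Γ₁ Δ₁ cs₁

mutual

theorem transfer1_seq {x : ℕ} {σ : ℕ → ℕ} :
    ∀ (c : NCtx) (X₁ : Multiset ℕ) (Γ₁ Δ₁ : Multiset Fml) (cs₁ : NSeqs) (T : NSeq),
    c.holes = 1 → SRel x σ (c.fill [.node X₁ Γ₁ Δ₁ cs₁]) T → Out1 x σ c X₁ Γ₁ Δ₁ cs₁ T
  | .node X Γ Δ k cs, X₁, Γ₁, Δ₁, cs₁, T, hc, h => by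
      have hc' : k + cs.holes = 1 := hc
      match k, hc' with
      | 1, hc' =>
        have hcs0 : cs.holes = 0 := by omega
        have h' : SRel x σ (.node (X + X₁) (Γ + Γ₁) (Δ + Δ₁) (NCtxs.fill cs [] ++ cs₁)) T := h
        cases h' with
        | node hX hΓ hΔ hch =>
        rw [Multiset.map_add] at hX
        obtain ⟨W₁, W₂, rfl, hmem⟩ := rx_split hX
        obtain ⟨Γc', Γ₁', hΓ1, hΓ2, rfl⟩ := Multiset.rel_add_left.1 hΓ
        obtain ⟨Δc', Δ₁', hΔ1, hΔ2, rfl⟩ := Multiset.rel_add_left.1 hΔ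
        obtain ⟨ts₁, ts₂, rfl, hch1, hch2⟩ := srels_append_split hch
        have hsub : ∀ v, (v ∈ X.toFinset ∨ v ∈ X₁.toFinset ∨ v ∈ msFv Γ ∨ v ∈ msFv Δ ∨
            v ∈ NSeqs.fv (NCtxs.fill cs [])) →
            v ∈ (NSeq.node (X + X₁) (Γ + Γ₁) (Δ + Δ₁) (NCtxs.fill cs [] ++ cs₁)).fv := by
          intro v hv
          simp only [NSeq.fv, Multiset.toFinset_add, msFv_add, NSeqs.fv_append,
            Finset.mem_union]
          tauto
        refine ⟨.node W₁ Γc' Δc' 1 (toCtxs ts₁), W₂, Γ₁', Δ₁', ts₂, ?_, ?_, ?_, hΓ2, hΔ2,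
          hch2, ?_, ?_⟩
        · show 1 + (toCtxs ts₁).holes = 1
          rw [holes_toCtxs]
        · show List.replicate 1 0 ++ ((toCtxs ts₁).holeDepths).map (· + 1) =
            List.replicate 1 0 ++ (cs.holeDepths).map (· + 1)
          rw [holeDepths_toCtxs, holeDepths_nils_of_holes_zero hcs0]
        · show NSeq.node (W₁ + W₂) (Γc' + Γ₁') (Δc' + Δ₁') (ts₁ ++ ts₂) =
            NSeq.node (W₁ + W₂) (Γc' + Γ₁') (Δc' + Δ₁') (NCtxs.fill (toCtxs ts₁) [] ++ ts₂)
          rw [fill_toCtxs]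
        · intro v hv
          exact hmem (σ v) (Multiset.mem_map_of_mem σ hv)
        · intro σ₂ hag E Γ₂ Δ₂ cs₂ Γ₂' Δ₂' cs₂' m1 m2 m3
          show SRel x σ₂ (.node (X + (E + X₁)) (Γ + Γ₂) (Δ + Δ₂) (NCtxs.fill cs [] ++ cs₂))
            (.node (W₁ + (E.map σ₂ + W₂)) (Γc' + Γ₂') (Δc' + Δ₂')
              (NCtxs.fill (toCtxs ts₁) [] ++ cs₂'))
          rw [fill_toCtxs]
          refine SRel.node ?_ ?_ ?_ ?_
          · have e1 : X + (E + X₁) = E + (X + X₁) := add_left_comm X E X₁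
            have e2 : W₁ + (Multiset.map σ₂ E + W₂) = Multiset.map σ₂ E + (W₁ + W₂) :=
              add_left_comm W₁ (Multiset.map σ₂ E) W₂
            rw [e1, e2, Multiset.map_add]
            refine rx_add_left _ ?_
            have hXX : (X + X₁).map σ₂ = (X + X₁).map σ := map_congrσ fun v hv => hag v
              (hsub v (by
                rw [Multiset.toFinset_add, Finset.mem_union] at hv
                tauto))
            rw [hXX, Multiset.map_add]
            exact hX
          · exact Multiset.Rel.add (MRel.congrσ hΓ1 fun v hv => (hag v (hsub v (by tauto))).symm) m1
          · exact Multiset.Rel.add (MRel.congrσ hΔ1 fun v hv => (hag v (hsub v (by tauto))).symm) m2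
          · exact SRels.append (hch1.congrσ fun v hv => (hag v (hsub v (by tauto))).symm) m3
      | (k'+2), hc' => exact absurd hc' (by omega)
      | 0, hc' =>
        have hcs1 : cs.holes = 1 := by omega
        have h' : SRel x σ (.node X Γ Δ (NCtxs.fill cs [.node X₁ Γ₁ Δ₁ cs₁])) T := h
        cases h' with
        | node hX hΓ hΔ hch =>
        obtain ⟨cs', X₁', Γ₁', Δ₁', cs₁', oh, od, rfl, o1, o2, o3, o4, oreb⟩ :=
          transfer1_seqs cs X₁ Γ₁ Δ₁ cs₁ _ hcs1 hch
        have hsub : ∀ v, (v ∈ X.toFinset ∨ v ∈ msFv Γ ∨ v ∈ msFv Δ ∨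
            v ∈ NSeqs.fv (NCtxs.fill cs [.node X₁ Γ₁ Δ₁ cs₁])) →
            v ∈ (NSeq.node X Γ Δ (NCtxs.fill cs [.node X₁ Γ₁ Δ₁ cs₁])).fv := by
          intro v hv
          simp only [NSeq.fv, Finset.mem_union]
          tauto
        refine ⟨.node _ _ _ 0 cs', X₁', Γ₁', Δ₁', cs₁', ?_, ?_, rfl, o1, o2, o3, o4, ?_⟩
        · show 0 + NCtxs.holes cs' = 1
          rw [oh]
        · show List.replicate 0 0 ++ (NCtxs.holeDepths cs').map (· + 1) =
            List.replicate 0 0 ++ (NCtxs.holeDepths cs).map (· + 1)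
          rw [od]
        · intro σ₂ hag E Γ₂ Δ₂ cs₂ Γ₂' Δ₂' cs₂' m1 m2 m3
          show SRel x σ₂ (.node X Γ Δ (NCtxs.fill cs [.node (E + X₁) Γ₂ Δ₂ cs₂])) _
          refine SRel.node ?_ ?_ ?_ ?_
          · have hXX : X.map σ₂ = X.map σ := map_congrσ fun v hv => hag v (hsub v (by tauto))
            rw [hXX]; exact hX
          · exact MRel.congrσ hΓ fun v hv => (hag v (hsub v (by tauto))).symm
          · exact MRel.congrσ hΔ fun v hv => (hag v (hsub v (by tauto))).symm
          · exact oreb σ₂ (fun v hv => hag v (hsub v (by tauto))) E Γ₂ Δ₂ cs₂ Γ₂' Δ₂' cs₂'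
              m1 m2 m3

theorem transfer1_seqs {x : ℕ} {σ : ℕ → ℕ} :
    ∀ (cs : NCtxs) (X₁ : Multiset ℕ) (Γ₁ Δ₁ : Multiset Fml) (cs₁ : NSeqs) (ts : NSeqs),
    NCtxs.holes cs = 1 → SRels x σ (NCtxs.fill cs [.node X₁ Γ₁ Δ₁ cs₁]) ts →
    Out1s x σ cs X₁ Γ₁ Δ₁ cs₁ ts
  | .nil, X₁, Γ₁, Δ₁, cs₁, ts, hc, h => by cases hc
  | .cons c cs, X₁, Γ₁, Δ₁, cs₁, ts, hc, h => by
      have hc' : c.holes + cs.holes = 1 := hc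
      by_cases hc1 : c.holes = 1
      · have hcs0 : cs.holes = 0 := by omega
        have h' : SRels x σ (.cons (c.fill ([NSeq.node X₁ Γ₁ Δ₁ cs₁].take c.holes))
            (NCtxs.fill cs ([NSeq.node X₁ Γ₁ Δ₁ cs₁].drop c.holes))) ts := h
        rw [hc1] at h'
        have h'' : SRels x σ (.cons (c.fill [.node X₁ Γ₁ Δ₁ cs₁]) (NCtxs.fill cs [])) ts := h'
        cases h'' with
        | cons h1 h2 =>
        rename_i t' ts'
        obtain ⟨c', X₁', Γ₁', Δ₁', cs₁', oh, od, rfl, o1, o2, o3, o4, oreb⟩ :=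
          transfer1_seq c X₁ Γ₁ Δ₁ cs₁ t' hc1 h1
        refine ⟨.cons c' (toCtxs ts'), X₁', Γ₁', Δ₁', cs₁', ?_, ?_, ?_, o1, o2, o3, o4, ?_⟩
        · show c'.holes + (toCtxs ts').holes = 1
          rw [oh, holes_toCtxs]
        · show c'.holeDepths ++ (toCtxs ts').holeDepths = c.holeDepths ++ cs.holeDepths
          rw [od, holeDepths_toCtxs, holeDepths_nils_of_holes_zero hcs0]
        · show NSeqs.cons (c'.fill [.node X₁' Γ₁' Δ₁' cs₁']) ts' =
            .cons (c'.fill ([NSeq.node X₁' Γ₁' Δ₁' cs₁'].take c'.holes))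
              (NCtxs.fill (toCtxs ts') ([NSeq.node X₁' Γ₁' Δ₁' cs₁'].drop c'.holes))
          rw [oh, fill_toCtxs]
          rfl
        · intro σ₂ hag E Γ₂ Δ₂ cs₂ Γ₂' Δ₂' cs₂' m1 m2 m3
          have hagsub : ∀ v ∈ (c.fill [NSeq.node X₁ Γ₁ Δ₁ cs₁]).fv, σ₂ v = σ v := by
            intro v hv
            apply hag v
            show v ∈ NSeqs.fv (.cons (c.fill ([NSeq.node X₁ Γ₁ Δ₁ cs₁].take c.holes))
              (NCtxs.fill cs ([NSeq.node X₁ Γ₁ Δ₁ cs₁].drop c.holes)))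
            rw [hc1]
            show v ∈ (c.fill [NSeq.node X₁ Γ₁ Δ₁ cs₁]).fv ∪
              NSeqs.fv (NCtxs.fill cs [])
            exact Finset.mem_union_left _ hv
          have hagtail : ∀ v ∈ NSeqs.fv (NCtxs.fill cs []), σ₂ v = σ v := by
            intro v hv
            apply hag v
            show v ∈ NSeqs.fv (.cons (c.fill ([NSeq.node X₁ Γ₁ Δ₁ cs₁].take c.holes))
              (NCtxs.fill cs ([NSeq.node X₁ Γ₁ Δ₁ cs₁].drop c.holes)))
            rw [hc1]
            show v ∈ (c.fill [NSeq.node X₁ Γ₁ Δ₁ cs₁]).fv ∪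
              NSeqs.fv (NCtxs.fill cs [])
            exact Finset.mem_union_right _ hv
          show SRels x σ₂ (.cons (c.fill ([NSeq.node (E + X₁) Γ₂ Δ₂ cs₂].take c.holes))
              (NCtxs.fill cs ([NSeq.node (E + X₁) Γ₂ Δ₂ cs₂].drop c.holes)))
            (.cons (c'.fill ([NSeq.node (E.map σ₂ + X₁') Γ₂' Δ₂' cs₂'].take c'.holes))
              (NCtxs.fill (toCtxs ts') ([NSeq.node (E.map σ₂ + X₁') Γ₂' Δ₂' cs₂'].drop c'.holes)))
          rw [hc1, oh, fill_toCtxs]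
          exact SRels.cons (oreb σ₂ hagsub E Γ₂ Δ₂ cs₂ Γ₂' Δ₂' cs₂' m1 m2 m3)
            (SRels.congrσ h2 (fun v hv => (hagtail v hv).symm))
      · have hc0 : c.holes = 0 := by omega
        have hcs1 : cs.holes = 1 := by omega
        have h' : SRels x σ (.cons (c.fill ([NSeq.node X₁ Γ₁ Δ₁ cs₁].take c.holes))
            (NCtxs.fill cs ([NSeq.node X₁ Γ₁ Δ₁ cs₁].drop c.holes))) ts := h
        rw [hc0] at h'
        have h'' : SRels x σ (.cons (c.fill []) (NCtxs.fill cs [.node X₁ Γ₁ Δ₁ cs₁])) ts := h'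
        cases h'' with
        | cons h1 h2 =>
        rename_i t' ts'
        obtain ⟨cs', X₁', Γ₁', Δ₁', cs₁', oh, od, rfl, o1, o2, o3, o4, oreb⟩ :=
          transfer1_seqs cs X₁ Γ₁ Δ₁ cs₁ ts' hcs1 h2
        refine ⟨.cons (toCtx t') cs', X₁', Γ₁', Δ₁', cs₁', ?_, ?_, ?_, o1, o2, o3, o4, ?_⟩
        · show (toCtx t').holes + NCtxs.holes cs' = 1
          rw [holes_toCtx, oh]
        · show (toCtx t').holeDepths ++ NCtxs.holeDepths cs' = c.holeDepths ++ cs.holeDepths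
          rw [holeDepths_toCtx, od, holeDepths_nil_of_holes_zero hc0]
        · show NSeqs.cons t' (NCtxs.fill cs' [.node X₁' Γ₁' Δ₁' cs₁']) =
            .cons ((toCtx t').fill ([NSeq.node X₁' Γ₁' Δ₁' cs₁'].take (toCtx t').holes))
              (NCtxs.fill cs' ([NSeq.node X₁' Γ₁' Δ₁' cs₁'].drop (toCtx t').holes))
          rw [holes_toCtx, fill_toCtx]
          rfl
        · intro σ₂ hag E Γ₂ Δ₂ cs₂ Γ₂' Δ₂' cs₂' m1 m2 m3
          have hagsub : ∀ v ∈ (c.fill []).fv, σ₂ v = σ v := by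
            intro v hv
            apply hag v
            show v ∈ NSeqs.fv (.cons (c.fill ([NSeq.node X₁ Γ₁ Δ₁ cs₁].take c.holes))
              (NCtxs.fill cs ([NSeq.node X₁ Γ₁ Δ₁ cs₁].drop c.holes)))
            rw [hc0]
            show v ∈ (c.fill []).fv ∪ NSeqs.fv (NCtxs.fill cs [.node X₁ Γ₁ Δ₁ cs₁])
            exact Finset.mem_union_left _ hv
          have hagtail : ∀ v ∈ NSeqs.fv (NCtxs.fill cs [.node X₁ Γ₁ Δ₁ cs₁]), σ₂ v = σ v := by
            intro v hv
            apply hag v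
            show v ∈ NSeqs.fv (.cons (c.fill ([NSeq.node X₁ Γ₁ Δ₁ cs₁].take c.holes))
              (NCtxs.fill cs ([NSeq.node X₁ Γ₁ Δ₁ cs₁].drop c.holes)))
            rw [hc0]
            show v ∈ (c.fill []).fv ∪ NSeqs.fv (NCtxs.fill cs [.node X₁ Γ₁ Δ₁ cs₁])
            exact Finset.mem_union_right _ hv
          show SRels x σ₂ (.cons (c.fill ([NSeq.node (E + X₁) Γ₂ Δ₂ cs₂].take c.holes))
              (NCtxs.fill cs ([NSeq.node (E + X₁) Γ₂ Δ₂ cs₂].drop c.holes)))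
            (.cons ((toCtx t').fill ([NSeq.node (E.map σ₂ + X₁') Γ₂' Δ₂' cs₂'].take (toCtx t').holes))
              (NCtxs.fill cs' ([NSeq.node (E.map σ₂ + X₁') Γ₂' Δ₂' cs₂'].drop (toCtx t').holes)))
          rw [hc0, holes_toCtx, fill_toCtx]
          exact SRels.cons (SRel.congrσ h1 (fun v hv => (hagsub v hv).symm))
            (oreb σ₂ hagtail E Γ₂ Δ₂ cs₂ Γ₂' Δ₂' cs₂' m1 m2 m3)

end

end NQML
namespace NQML

/-! ## Two-hole transfer -/

def Reb2 (x : ℕ) (σ : ℕ → ℕ) (c c' : NCtx) (X₁ X₁' X₂ X₂' : Multiset ℕ)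
    (Γ₁ Δ₁ : Multiset Fml) (cs₁ : NSeqs) (Γ₂ Δ₂ : Multiset Fml) (cs₂ : NSeqs) : Prop :=
  ∀ (σ₂ : ℕ → ℕ),
    (∀ v ∈ (c.fill [.node X₁ Γ₁ Δ₁ cs₁, .node X₂ Γ₂ Δ₂ cs₂]).fv, σ₂ v = σ v) →
    ∀ (E₁ E₂ : Multiset ℕ) (Γa Δa : Multiset Fml) (csa : NSeqs)
      (Γa' Δa' : Multiset Fml) (csa' : NSeqs) (Γb Δb : Multiset Fml) (csb : NSeqs)
      (Γb' Δb' : Multiset Fml) (csb' : NSeqs),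
      MRel σ₂ Γa Γa' → MRel σ₂ Δa Δa' → SRels x σ₂ csa csa' →
      MRel σ₂ Γb Γb' → MRel σ₂ Δb Δb' → SRels x σ₂ csb csb' →
      SRel x σ₂ (c.fill [.node (E₁ + X₁) Γa Δa csa, .node (E₂ + X₂) Γb Δb csb])
        (c'.fill [.node (E₁.map σ₂ + X₁') Γa' Δa' csa', .node (E₂.map σ₂ + X₂') Γb' Δb' csb'])

def Out2 (x : ℕ) (σ : ℕ → ℕ) (c : NCtx) (X₁ : Multiset ℕ) (Γ₁ Δ₁ : Multiset Fml)
    (cs₁ : NSeqs) (X₂ : Multiset ℕ) (Γ₂ Δ₂ : Multiset Fml) (cs₂ : NSeqs) (T : NSeq) : Prop :=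
  ∃ c' X₁' Γ₁' Δ₁' cs₁' X₂' Γ₂' Δ₂' cs₂', c'.holes = 2 ∧ c'.holeDepths = c.holeDepths ∧
    T = c'.fill [.node X₁' Γ₁' Δ₁' cs₁', .node X₂' Γ₂' Δ₂' cs₂'] ∧
    MRel σ Γ₁ Γ₁' ∧ MRel σ Δ₁ Δ₁' ∧ SRels x σ cs₁ cs₁' ∧
    MRel σ Γ₂ Γ₂' ∧ MRel σ Δ₂ Δ₂' ∧ SRels x σ cs₂ cs₂' ∧
    (∀ v ∈ X₁, σ v ∈ X₁') ∧ Reb2 x σ c c' X₁ X₁' X₂ X₂' Γ₁ Δ₁ cs₁ Γ₂ Δ₂ cs₂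

def Reb2s (x : ℕ) (σ : ℕ → ℕ) (cs cs' : NCtxs) (X₁ X₁' X₂ X₂' : Multiset ℕ)
    (Γ₁ Δ₁ : Multiset Fml) (cs₁ : NSeqs) (Γ₂ Δ₂ : Multiset Fml) (cs₂ : NSeqs) : Prop :=
  ∀ (σ₂ : ℕ → ℕ),
    (∀ v ∈ (NCtxs.fill cs [.node X₁ Γ₁ Δ₁ cs₁, .node X₂ Γ₂ Δ₂ cs₂]).fv, σ₂ v = σ v) →
    ∀ (E₁ E₂ : Multiset ℕ) (Γa Δa : Multiset Fml) (csa : NSeqs)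
      (Γa' Δa' : Multiset Fml) (csa' : NSeqs) (Γb Δb : Multiset Fml) (csb : NSeqs)
      (Γb' Δb' : Multiset Fml) (csb' : NSeqs),
      MRel σ₂ Γa Γa' → MRel σ₂ Δa Δa' → SRels x σ₂ csa csa' →
      MRel σ₂ Γb Γb' → MRel σ₂ Δb Δb' → SRels x σ₂ csb csb' →
      SRels x σ₂ (NCtxs.fill cs [.node (E₁ + X₁) Γa Δa csa, .node (E₂ + X₂) Γb Δb csb])
        (NCtxs.fill cs' [.node (E₁.map σ₂ + X₁') Γa' Δa' csa', .node (E₂.map σ₂ + X₂') Γb' Δb' csb'])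

def Out2s (x : ℕ) (σ : ℕ → ℕ) (cs : NCtxs) (X₁ : Multiset ℕ) (Γ₁ Δ₁ : Multiset Fml)
    (cs₁ : NSeqs) (X₂ : Multiset ℕ) (Γ₂ Δ₂ : Multiset Fml) (cs₂ : NSeqs) (ts : NSeqs) : Prop :=
  ∃ cs' X₁' Γ₁' Δ₁' cs₁' X₂' Γ₂' Δ₂' cs₂', NCtxs.holes cs' = 2 ∧
    NCtxs.holeDepths cs' = NCtxs.holeDepths cs ∧
    ts = NCtxs.fill cs' [.node X₁' Γ₁' Δ₁' cs₁', .node X₂' Γ₂' Δ₂' cs₂'] ∧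
    MRel σ Γ₁ Γ₁' ∧ MRel σ Δ₁ Δ₁' ∧ SRels x σ cs₁ cs₁' ∧
    MRel σ Γ₂ Γ₂' ∧ MRel σ Δ₂ Δ₂' ∧ SRels x σ cs₂ cs₂' ∧
    (∀ v ∈ X₁, σ v ∈ X₁') ∧ Reb2s x σ cs cs' X₁ X₁' X₂ X₂' Γ₁ Δ₁ cs₁ Γ₂ Δ₂ cs₂

mutual

theorem transfer2_seq {x : ℕ} {σ : ℕ → ℕ} :
    ∀ (c : NCtx) (X₁ : Multiset ℕ) (Γ₁ Δ₁ : Multiset Fml) (cs₁ : NSeqs)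
      (X₂ : Multiset ℕ) (Γ₂ Δ₂ : Multiset Fml) (cs₂ : NSeqs) (T : NSeq),
    c.holes = 2 → SRel x σ (c.fill [.node X₁ Γ₁ Δ₁ cs₁, .node X₂ Γ₂ Δ₂ cs₂]) T →
    Out2 x σ c X₁ Γ₁ Δ₁ cs₁ X₂ Γ₂ Δ₂ cs₂ T
  | .node X Γ Δ k cs, X₁, Γ₁, Δ₁, cs₁, X₂, Γ₂, Δ₂, cs₂, T, hc, h => by
      have hc' : k + cs.holes = 2 := hc
      match k, hc' with
      | (k'+3), hc' => exact absurd hc' (by omega)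
      | 2, hc' =>
        have hcs0 : cs.holes = 0 := by omega
        have h' : SRel x σ (.node (X + X₁ + X₂) (Γ + Γ₁ + Γ₂) (Δ + Δ₁ + Δ₂)
            ((NCtxs.fill cs [] ++ cs₁) ++ cs₂)) T := h
        cases h' with
        | node hX hΓ hΔ hch =>
        rename_i WT ΓT ΔT tsT
        have hXr : rx x ((X + X₂).map σ + X₁.map σ) WT := by
          rw [← Multiset.map_add, show X + X₂ + X₁ = X + X₁ + X₂ from add_right_comm X X₂ X₁]
          exact hX
        obtain ⟨W₁, W₂, rfl, hmem⟩ := rx_split hXr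
        obtain ⟨U, Γ₂', hU, hΓ2', rfl⟩ := Multiset.rel_add_left.1 hΓ
        obtain ⟨Γc', Γ₁', hΓc, hΓ1', rfl⟩ := Multiset.rel_add_left.1 hU
        obtain ⟨V, Δ₂', hV, hΔ2', rfl⟩ := Multiset.rel_add_left.1 hΔ
        obtain ⟨Δc', Δ₁', hΔc, hΔ1', rfl⟩ := Multiset.rel_add_left.1 hV
        obtain ⟨tsU, tsc₂, rfl, hchU, hch2⟩ := srels_append_split hch
        obtain ⟨ts₁, tsc₁, rfl, hch0, hch1⟩ := srels_append_split hchU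
        have hsub : ∀ v, (v ∈ X.toFinset ∨ v ∈ X₁.toFinset ∨ v ∈ X₂.toFinset ∨
            v ∈ msFv Γ ∨ v ∈ msFv Δ ∨ v ∈ NSeqs.fv (NCtxs.fill cs [])) →
            v ∈ (NSeq.node (X + X₁ + X₂) (Γ + Γ₁ + Γ₂) (Δ + Δ₁ + Δ₂)
              ((NCtxs.fill cs [] ++ cs₁) ++ cs₂)).fv := by
          intro v hv
          simp only [NSeq.fv, Multiset.toFinset_add, msFv_add, NSeqs.fv_append,
            Finset.mem_union]
          tauto
        refine ⟨.node W₁ Γc' Δc' 2 (toCtxs ts₁), W₂, Γ₁', Δ₁', tsc₁, 0, Γ₂', Δ₂', tsc₂,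
          ?_, ?_, ?_, hΓ1', hΔ1', hch1, hΓ2', hΔ2', hch2, ?_, ?_⟩
        · show 2 + (toCtxs ts₁).holes = 2
          rw [holes_toCtxs]
        · show List.replicate 2 0 ++ ((toCtxs ts₁).holeDepths).map (· + 1) =
            List.replicate 2 0 ++ (cs.holeDepths).map (· + 1)
          rw [holeDepths_toCtxs, holeDepths_nils_of_holes_zero hcs0]
        · show NSeq.node (W₁ + W₂) ((Γc' + Γ₁') + Γ₂') ((Δc' + Δ₁') + Δ₂') ((ts₁ ++ tsc₁) ++ tsc₂)
            = NSeq.node (W₁ + W₂ + 0) ((Γc' + Γ₁') + Γ₂') ((Δc' + Δ₁') + Δ₂')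
              ((NCtxs.fill (toCtxs ts₁) [] ++ tsc₁) ++ tsc₂)
          rw [fill_toCtxs, add_zero]
        · intro v hv
          exact hmem (σ v) (Multiset.mem_map_of_mem σ hv)
        · intro σ₂ hag E₁ E₂ Γa Δa csa Γa' Δa' csa' Γb Δb csb Γb' Δb' csb' m1 m2 m3 m4 m5 m6
          show SRel x σ₂ (.node (X + (E₁ + X₁) + (E₂ + X₂)) (Γ + Γa + Γb) (Δ + Δa + Δb)
              ((NCtxs.fill cs [] ++ csa) ++ csb))
            (.node (W₁ + (E₁.map σ₂ + W₂) + (E₂.map σ₂ + 0)) ((Γc' + Γa') + Γb')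
              ((Δc' + Δa') + Δb') ((NCtxs.fill (toCtxs ts₁) [] ++ csa') ++ csb'))
          rw [fill_toCtxs]
          refine SRel.node ?_ ?_ ?_ ?_
          · have e1 : X + (E₁ + X₁) + (E₂ + X₂) = (E₁ + E₂) + (X + X₁ + X₂) := by
              ext a
              simp only [Multiset.count_add]
              omega
            have e2 : W₁ + (E₁.map σ₂ + W₂) + (E₂.map σ₂ + 0) =
                (E₁.map σ₂ + E₂.map σ₂) + (W₁ + W₂) := by
              ext a
              simp only [Multiset.count_add, Multiset.count_zero]
              omega
            rw [e1, e2, Multiset.map_add, Multiset.map_add]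
            refine rx_add_left _ ?_
            have hXX : (X + X₁ + X₂).map σ₂ = (X + X₁ + X₂).map σ := map_congrσ fun v hv =>
              hag v (hsub v (by
                rw [Multiset.toFinset_add, Multiset.toFinset_add, Finset.mem_union,
                  Finset.mem_union] at hv
                tauto))
            rw [hXX]
            exact hX
          · exact Multiset.Rel.add (Multiset.Rel.add
              (MRel.congrσ hΓc fun v hv => (hag v (hsub v (by tauto))).symm) m1) m4
          · exact Multiset.Rel.add (Multiset.Rel.add
              (MRel.congrσ hΔc fun v hv => (hag v (hsub v (by tauto))).symm) m2) m5
          · exact SRels.append (SRels.append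
              (hch0.congrσ fun v hv => (hag v (hsub v (by tauto))).symm) m3) m6
      | 1, hc' =>
        have hcs1 : cs.holes = 1 := by omega
        have h' : SRel x σ (.node (X + X₁) (Γ + Γ₁) (Δ + Δ₁)
            (NCtxs.fill cs [.node X₂ Γ₂ Δ₂ cs₂] ++ cs₁)) T := h
        cases h' with
        | node hX hΓ hΔ hch =>
        rw [Multiset.map_add] at hX
        obtain ⟨W₁, W₂, rfl, hmem⟩ := rx_split hX
        obtain ⟨Γc', Γ₁', hΓc, hΓ1', rfl⟩ := Multiset.rel_add_left.1 hΓ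
        obtain ⟨Δc', Δ₁', hΔc, hΔ1', rfl⟩ := Multiset.rel_add_left.1 hΔ
        obtain ⟨tsA, tsc₁, rfl, hchA, hch1⟩ := srels_append_split hch
        obtain ⟨cs', X₂', Γ₂', Δ₂', cs₂', oh, od, rfl, o1, o2, o3, _, oreb⟩ :=
          transfer1_seqs cs X₂ Γ₂ Δ₂ cs₂ tsA hcs1 hchA
        have hsub : ∀ v, (v ∈ X.toFinset ∨ v ∈ X₁.toFinset ∨ v ∈ msFv Γ ∨ v ∈ msFv Δ ∨
            v ∈ NSeqs.fv (NCtxs.fill cs [.node X₂ Γ₂ Δ₂ cs₂])) →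
            v ∈ (NSeq.node (X + X₁) (Γ + Γ₁) (Δ + Δ₁)
              (NCtxs.fill cs [.node X₂ Γ₂ Δ₂ cs₂] ++ cs₁)).fv := by
          intro v hv
          simp only [NSeq.fv, Multiset.toFinset_add, msFv_add, NSeqs.fv_append,
            Finset.mem_union]
          tauto
        refine ⟨.node W₁ Γc' Δc' 1 cs', W₂, Γ₁', Δ₁', tsc₁, X₂', Γ₂', Δ₂', cs₂',
          ?_, ?_, ?_, hΓ1', hΔ1', hch1, o1, o2, o3, ?_, ?_⟩
        · show 1 + NCtxs.holes cs' = 2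
          rw [oh]
        · show List.replicate 1 0 ++ (NCtxs.holeDepths cs').map (· + 1) =
            List.replicate 1 0 ++ (NCtxs.holeDepths cs).map (· + 1)
          rw [od]
        · show NSeq.node (W₁ + W₂) (Γc' + Γ₁') (Δc' + Δ₁')
              (NCtxs.fill cs' [.node X₂' Γ₂' Δ₂' cs₂'] ++ tsc₁) =
            NSeq.node (W₁ + W₂) (Γc' + Γ₁') (Δc' + Δ₁')
              (NCtxs.fill cs' ([NSeq.node W₂ Γ₁' Δ₁' tsc₁, NSeq.node X₂' Γ₂' Δ₂' cs₂'].drop 1)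
                ++ tsc₁)
          rfl
        · intro v hv
          exact hmem (σ v) (Multiset.mem_map_of_mem σ hv)
        · intro σ₂ hag E₁ E₂ Γa Δa csa Γa' Δa' csa' Γb Δb csb Γb' Δb' csb' m1 m2 m3 m4 m5 m6
          show SRel x σ₂ (.node (X + (E₁ + X₁)) (Γ + Γa) (Δ + Δa)
              (NCtxs.fill cs [.node (E₂ + X₂) Γb Δb csb] ++ csa))
            (.node (W₁ + (E₁.map σ₂ + W₂)) (Γc' + Γa') (Δc' + Δa')
              (NCtxs.fill cs' [.node (E₂.map σ₂ + X₂') Γb' Δb' csb'] ++ csa'))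
          refine SRel.node ?_ ?_ ?_ ?_
          · have e1 : X + (E₁ + X₁) = E₁ + (X + X₁) := add_left_comm X E₁ X₁
            have e2 : W₁ + (E₁.map σ₂ + W₂) = E₁.map σ₂ + (W₁ + W₂) :=
              add_left_comm W₁ (E₁.map σ₂) W₂
            rw [e1, e2, Multiset.map_add]
            refine rx_add_left _ ?_
            have hXX : (X + X₁).map σ₂ = (X + X₁).map σ := map_congrσ fun v hv =>
              hag v (hsub v (by
                rw [Multiset.toFinset_add, Finset.mem_union] at hv
                tauto))
            rw [hXX, Multiset.map_add]
            exact hX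
          · exact Multiset.Rel.add (MRel.congrσ hΓc fun v hv =>
              (hag v (hsub v (by tauto))).symm) m1
          · exact Multiset.Rel.add (MRel.congrσ hΔc fun v hv =>
              (hag v (hsub v (by tauto))).symm) m2
          · exact SRels.append (oreb σ₂ (fun v hv => hag v (hsub v (by tauto)))
              E₂ Γb Δb csb Γb' Δb' csb' m4 m5 m6) m3
      | 0, hc' =>
        have hcs2 : cs.holes = 2 := by omega
        have h' : SRel x σ (.node X Γ Δ
            (NCtxs.fill cs [.node X₁ Γ₁ Δ₁ cs₁, .node X₂ Γ₂ Δ₂ cs₂])) T := h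
        cases h' with
        | node hX hΓ hΔ hch =>
        obtain ⟨cs', X₁', Γ₁', Δ₁', cs₁', X₂', Γ₂', Δ₂', cs₂', oh, od, rfl, o1, o2, o3,
          o4, o5, o6, o7, oreb⟩ := transfer2_seqs cs X₁ Γ₁ Δ₁ cs₁ X₂ Γ₂ Δ₂ cs₂ _ hcs2 hch
        have hsub : ∀ v, (v ∈ X.toFinset ∨ v ∈ msFv Γ ∨ v ∈ msFv Δ ∨
            v ∈ NSeqs.fv (NCtxs.fill cs [.node X₁ Γ₁ Δ₁ cs₁, .node X₂ Γ₂ Δ₂ cs₂])) →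
            v ∈ (NSeq.node X Γ Δ
              (NCtxs.fill cs [.node X₁ Γ₁ Δ₁ cs₁, .node X₂ Γ₂ Δ₂ cs₂])).fv := by
          intro v hv
          simp only [NSeq.fv, Finset.mem_union]
          tauto
        refine ⟨.node _ _ _ 0 cs', X₁', Γ₁', Δ₁', cs₁', X₂', Γ₂', Δ₂', cs₂',
          ?_, ?_, rfl, o1, o2, o3, o4, o5, o6, o7, ?_⟩
        · show 0 + NCtxs.holes cs' = 2
          rw [oh]
        · show List.replicate 0 0 ++ (NCtxs.holeDepths cs').map (· + 1) =
            List.replicate 0 0 ++ (NCtxs.holeDepths cs).map (· + 1)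
          rw [od]
        · intro σ₂ hag E₁ E₂ Γa Δa csa Γa' Δa' csa' Γb Δb csb Γb' Δb' csb' m1 m2 m3 m4 m5 m6
          show SRel x σ₂ (.node X Γ Δ
            (NCtxs.fill cs [.node (E₁ + X₁) Γa Δa csa, .node (E₂ + X₂) Γb Δb csb])) _
          refine SRel.node ?_ ?_ ?_ ?_
          · have hXX : X.map σ₂ = X.map σ := map_congrσ fun v hv => hag v (hsub v (by tauto))
            rw [hXX]; exact hX
          · exact MRel.congrσ hΓ fun v hv => (hag v (hsub v (by tauto))).symm
          · exact MRel.congrσ hΔ fun v hv => (hag v (hsub v (by tauto))).symm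
          · exact oreb σ₂ (fun v hv => hag v (hsub v (by tauto))) E₁ E₂ Γa Δa csa Γa' Δa' csa'
              Γb Δb csb Γb' Δb' csb' m1 m2 m3 m4 m5 m6

theorem transfer2_seqs {x : ℕ} {σ : ℕ → ℕ} :
    ∀ (cs : NCtxs) (X₁ : Multiset ℕ) (Γ₁ Δ₁ : Multiset Fml) (cs₁ : NSeqs)
      (X₂ : Multiset ℕ) (Γ₂ Δ₂ : Multiset Fml) (cs₂ : NSeqs) (ts : NSeqs),
    NCtxs.holes cs = 2 → SRels x σ (NCtxs.fill cs [.node X₁ Γ₁ Δ₁ cs₁, .node X₂ Γ₂ Δ₂ cs₂]) ts →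
    Out2s x σ cs X₁ Γ₁ Δ₁ cs₁ X₂ Γ₂ Δ₂ cs₂ ts
  | .nil, _, _, _, _, _, _, _, _, ts, hc, h => by cases hc
  | .cons c cs, X₁, Γ₁, Δ₁, cs₁, X₂, Γ₂, Δ₂, cs₂, ts, hc, h => by
      have hc' : c.holes + cs.holes = 2 := hc
      match hk : c.holes, hc' with
      | (k'+3), hc' => exact absurd hc' (by omega)
      | 2, hc' =>
        have hcs0 : cs.holes = 0 := by omega
        have h' : SRels x σ (.cons (c.fill ([NSeq.node X₁ Γ₁ Δ₁ cs₁,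
            NSeq.node X₂ Γ₂ Δ₂ cs₂].take c.holes))
            (NCtxs.fill cs ([NSeq.node X₁ Γ₁ Δ₁ cs₁, NSeq.node X₂ Γ₂ Δ₂ cs₂].drop c.holes)))
            ts := h
        rw [hk] at h'
        have h'' : SRels x σ (.cons (c.fill [.node X₁ Γ₁ Δ₁ cs₁, .node X₂ Γ₂ Δ₂ cs₂])
            (NCtxs.fill cs [])) ts := h'
        cases h'' with
        | cons h1 h2 =>
        rename_i t' ts'
        obtain ⟨c', X₁', Γ₁', Δ₁', cs₁', X₂', Γ₂', Δ₂', cs₂', oh, od, rfl, o1, o2, o3,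
          o4, o5, o6, o7, oreb⟩ := transfer2_seq c X₁ Γ₁ Δ₁ cs₁ X₂ Γ₂ Δ₂ cs₂ t' hk h1
        refine ⟨.cons c' (toCtxs ts'), X₁', Γ₁', Δ₁', cs₁', X₂', Γ₂', Δ₂', cs₂',
          ?_, ?_, ?_, o1, o2, o3, o4, o5, o6, o7, ?_⟩
        · show c'.holes + (toCtxs ts').holes = 2
          rw [oh, holes_toCtxs]
        · show c'.holeDepths ++ (toCtxs ts').holeDepths = c.holeDepths ++ cs.holeDepths
          rw [od, holeDepths_toCtxs, holeDepths_nils_of_holes_zero hcs0]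
        · show NSeqs.cons (c'.fill [.node X₁' Γ₁' Δ₁' cs₁', .node X₂' Γ₂' Δ₂' cs₂']) ts' =
            .cons (c'.fill ([NSeq.node X₁' Γ₁' Δ₁' cs₁', NSeq.node X₂' Γ₂' Δ₂' cs₂'].take c'.holes))
              (NCtxs.fill (toCtxs ts')
                ([NSeq.node X₁' Γ₁' Δ₁' cs₁', NSeq.node X₂' Γ₂' Δ₂' cs₂'].drop c'.holes))
          rw [oh, fill_toCtxs]
          rfl
        · intro σ₂ hag E₁ E₂ Γa Δa csa Γa' Δa' csa' Γb Δb csb Γb' Δb' csb' m1 m2 m3 m4 m5 m6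
          have hagsub : ∀ v ∈ (c.fill [NSeq.node X₁ Γ₁ Δ₁ cs₁,
              NSeq.node X₂ Γ₂ Δ₂ cs₂]).fv, σ₂ v = σ v := by
            intro v hv
            apply hag v
            show v ∈ NSeqs.fv (.cons (c.fill ([NSeq.node X₁ Γ₁ Δ₁ cs₁,
              NSeq.node X₂ Γ₂ Δ₂ cs₂].take c.holes))
              (NCtxs.fill cs ([NSeq.node X₁ Γ₁ Δ₁ cs₁, NSeq.node X₂ Γ₂ Δ₂ cs₂].drop c.holes)))
            rw [hk]
            exact Finset.mem_union_left _ hv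
          have hagtail : ∀ v ∈ NSeqs.fv (NCtxs.fill cs []), σ₂ v = σ v := by
            intro v hv
            apply hag v
            show v ∈ NSeqs.fv (.cons (c.fill ([NSeq.node X₁ Γ₁ Δ₁ cs₁,
              NSeq.node X₂ Γ₂ Δ₂ cs₂].take c.holes))
              (NCtxs.fill cs ([NSeq.node X₁ Γ₁ Δ₁ cs₁, NSeq.node X₂ Γ₂ Δ₂ cs₂].drop c.holes)))
            rw [hk]
            exact Finset.mem_union_right _ hv
          show SRels x σ₂ (.cons (c.fill ([NSeq.node (E₁ + X₁) Γa Δa csa,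
              NSeq.node (E₂ + X₂) Γb Δb csb].take c.holes))
              (NCtxs.fill cs ([NSeq.node (E₁ + X₁) Γa Δa csa,
                NSeq.node (E₂ + X₂) Γb Δb csb].drop c.holes)))
            (.cons (c'.fill ([NSeq.node (E₁.map σ₂ + X₁') Γa' Δa' csa',
              NSeq.node (E₂.map σ₂ + X₂') Γb' Δb' csb'].take c'.holes))
              (NCtxs.fill (toCtxs ts') ([NSeq.node (E₁.map σ₂ + X₁') Γa' Δa' csa',
                NSeq.node (E₂.map σ₂ + X₂') Γb' Δb' csb'].drop c'.holes)))
          rw [hk, oh, fill_toCtxs]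
          exact SRels.cons (oreb σ₂ hagsub E₁ E₂ Γa Δa csa Γa' Δa' csa' Γb Δb csb Γb' Δb' csb'
            m1 m2 m3 m4 m5 m6) (SRels.congrσ h2 (fun v hv => (hagtail v hv).symm))
      | 1, hc' =>
        have hcs1 : cs.holes = 1 := by omega
        have h' : SRels x σ (.cons (c.fill ([NSeq.node X₁ Γ₁ Δ₁ cs₁,
            NSeq.node X₂ Γ₂ Δ₂ cs₂].take c.holes))
            (NCtxs.fill cs ([NSeq.node X₁ Γ₁ Δ₁ cs₁, NSeq.node X₂ Γ₂ Δ₂ cs₂].drop c.holes)))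
            ts := h
        rw [hk] at h'
        have h'' : SRels x σ (.cons (c.fill [.node X₁ Γ₁ Δ₁ cs₁])
            (NCtxs.fill cs [.node X₂ Γ₂ Δ₂ cs₂])) ts := h'
        cases h'' with
        | cons h1 h2 =>
        rename_i t' ts'
        obtain ⟨c', X₁', Γ₁', Δ₁', cs₁', oh, od, rfl, o1, o2, o3, o4, oreb⟩ :=
          transfer1_seq c X₁ Γ₁ Δ₁ cs₁ t' hk h1
        obtain ⟨cs', X₂', Γ₂', Δ₂', cs₂', oh2, od2, rfl, p1, p2, p3, _, oreb2⟩ :=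
          transfer1_seqs cs X₂ Γ₂ Δ₂ cs₂ ts' hcs1 h2
        refine ⟨.cons c' cs', X₁', Γ₁', Δ₁', cs₁', X₂', Γ₂', Δ₂', cs₂',
          ?_, ?_, ?_, o1, o2, o3, p1, p2, p3, o4, ?_⟩
        · show c'.holes + NCtxs.holes cs' = 2
          rw [oh, oh2]
        · show c'.holeDepths ++ NCtxs.holeDepths cs' = c.holeDepths ++ cs.holeDepths
          rw [od, od2]
        · show NSeqs.cons (c'.fill [.node X₁' Γ₁' Δ₁' cs₁'])
              (NCtxs.fill cs' [.node X₂' Γ₂' Δ₂' cs₂']) =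
            .cons (c'.fill ([NSeq.node X₁' Γ₁' Δ₁' cs₁', NSeq.node X₂' Γ₂' Δ₂' cs₂'].take c'.holes))
              (NCtxs.fill cs'
                ([NSeq.node X₁' Γ₁' Δ₁' cs₁', NSeq.node X₂' Γ₂' Δ₂' cs₂'].drop c'.holes))
          rw [oh]
          rfl
        · intro σ₂ hag E₁ E₂ Γa Δa csa Γa' Δa' csa' Γb Δb csb Γb' Δb' csb' m1 m2 m3 m4 m5 m6
          have hagsub : ∀ v ∈ (c.fill [NSeq.node X₁ Γ₁ Δ₁ cs₁]).fv, σ₂ v = σ v := by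
            intro v hv
            apply hag v
            show v ∈ NSeqs.fv (.cons (c.fill ([NSeq.node X₁ Γ₁ Δ₁ cs₁,
              NSeq.node X₂ Γ₂ Δ₂ cs₂].take c.holes))
              (NCtxs.fill cs ([NSeq.node X₁ Γ₁ Δ₁ cs₁, NSeq.node X₂ Γ₂ Δ₂ cs₂].drop c.holes)))
            rw [hk]
            exact Finset.mem_union_left _ hv
          have hagtail : ∀ v ∈ NSeqs.fv (NCtxs.fill cs [.node X₂ Γ₂ Δ₂ cs₂]), σ₂ v = σ v := by
            intro v hv
            apply hag v
            show v ∈ NSeqs.fv (.cons (c.fill ([NSeq.node X₁ Γ₁ Δ₁ cs₁,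
              NSeq.node X₂ Γ₂ Δ₂ cs₂].take c.holes))
              (NCtxs.fill cs ([NSeq.node X₁ Γ₁ Δ₁ cs₁, NSeq.node X₂ Γ₂ Δ₂ cs₂].drop c.holes)))
            rw [hk]
            exact Finset.mem_union_right _ hv
          show SRels x σ₂ (.cons (c.fill ([NSeq.node (E₁ + X₁) Γa Δa csa,
              NSeq.node (E₂ + X₂) Γb Δb csb].take c.holes))
              (NCtxs.fill cs ([NSeq.node (E₁ + X₁) Γa Δa csa,
                NSeq.node (E₂ + X₂) Γb Δb csb].drop c.holes)))
            (.cons (c'.fill ([NSeq.node (E₁.map σ₂ + X₁') Γa' Δa' csa',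
              NSeq.node (E₂.map σ₂ + X₂') Γb' Δb' csb'].take c'.holes))
              (NCtxs.fill cs' ([NSeq.node (E₁.map σ₂ + X₁') Γa' Δa' csa',
                NSeq.node (E₂.map σ₂ + X₂') Γb' Δb' csb'].drop c'.holes)))
          rw [hk, oh]
          exact SRels.cons (oreb σ₂ hagsub E₁ Γa Δa csa Γa' Δa' csa' m1 m2 m3)
            (oreb2 σ₂ hagtail E₂ Γb Δb csb Γb' Δb' csb' m4 m5 m6)
      | 0, hc' =>
        have hcs2 : cs.holes = 2 := by omega
        have h' : SRels x σ (.cons (c.fill ([NSeq.node X₁ Γ₁ Δ₁ cs₁,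
            NSeq.node X₂ Γ₂ Δ₂ cs₂].take c.holes))
            (NCtxs.fill cs ([NSeq.node X₁ Γ₁ Δ₁ cs₁, NSeq.node X₂ Γ₂ Δ₂ cs₂].drop c.holes)))
            ts := h
        rw [hk] at h'
        have h'' : SRels x σ (.cons (c.fill [])
            (NCtxs.fill cs [.node X₁ Γ₁ Δ₁ cs₁, .node X₂ Γ₂ Δ₂ cs₂])) ts := h'
        cases h'' with
        | cons h1 h2 =>
        rename_i t' ts'
        obtain ⟨cs', X₁', Γ₁', Δ₁', cs₁', X₂', Γ₂', Δ₂', cs₂', oh, od, rfl, o1, o2, o3,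
          o4, o5, o6, o7, oreb⟩ := transfer2_seqs cs X₁ Γ₁ Δ₁ cs₁ X₂ Γ₂ Δ₂ cs₂ ts' hcs2 h2
        refine ⟨.cons (toCtx t') cs', X₁', Γ₁', Δ₁', cs₁', X₂', Γ₂', Δ₂', cs₂',
          ?_, ?_, ?_, o1, o2, o3, o4, o5, o6, o7, ?_⟩
        · show (toCtx t').holes + NCtxs.holes cs' = 2
          rw [holes_toCtx, oh]
        · show (toCtx t').holeDepths ++ NCtxs.holeDepths cs' = c.holeDepths ++ cs.holeDepths
          rw [holeDepths_toCtx, od, holeDepths_nil_of_holes_zero hk]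
        · show NSeqs.cons t' (NCtxs.fill cs' [.node X₁' Γ₁' Δ₁' cs₁', .node X₂' Γ₂' Δ₂' cs₂']) =
            .cons ((toCtx t').fill ([NSeq.node X₁' Γ₁' Δ₁' cs₁',
              NSeq.node X₂' Γ₂' Δ₂' cs₂'].take (toCtx t').holes))
              (NCtxs.fill cs' ([NSeq.node X₁' Γ₁' Δ₁' cs₁',
                NSeq.node X₂' Γ₂' Δ₂' cs₂'].drop (toCtx t').holes))
          rw [holes_toCtx, fill_toCtx]
          rfl
        · intro σ₂ hag E₁ E₂ Γa Δa csa Γa' Δa' csa' Γb Δb csb Γb' Δb' csb' m1 m2 m3 m4 m5 m6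
          have hagsub : ∀ v ∈ (c.fill []).fv, σ₂ v = σ v := by
            intro v hv
            apply hag v
            show v ∈ NSeqs.fv (.cons (c.fill ([NSeq.node X₁ Γ₁ Δ₁ cs₁,
              NSeq.node X₂ Γ₂ Δ₂ cs₂].take c.holes))
              (NCtxs.fill cs ([NSeq.node X₁ Γ₁ Δ₁ cs₁, NSeq.node X₂ Γ₂ Δ₂ cs₂].drop c.holes)))
            rw [hk]
            exact Finset.mem_union_left _ hv
          have hagtail : ∀ v ∈ NSeqs.fv (NCtxs.fill cs [.node X₁ Γ₁ Δ₁ cs₁,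
              .node X₂ Γ₂ Δ₂ cs₂]), σ₂ v = σ v := by
            intro v hv
            apply hag v
            show v ∈ NSeqs.fv (.cons (c.fill ([NSeq.node X₁ Γ₁ Δ₁ cs₁,
              NSeq.node X₂ Γ₂ Δ₂ cs₂].take c.holes))
              (NCtxs.fill cs ([NSeq.node X₁ Γ₁ Δ₁ cs₁, NSeq.node X₂ Γ₂ Δ₂ cs₂].drop c.holes)))
            rw [hk]
            exact Finset.mem_union_right _ hv
          show SRels x σ₂ (.cons (c.fill ([NSeq.node (E₁ + X₁) Γa Δa csa,
              NSeq.node (E₂ + X₂) Γb Δb csb].take c.holes))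
              (NCtxs.fill cs ([NSeq.node (E₁ + X₁) Γa Δa csa,
                NSeq.node (E₂ + X₂) Γb Δb csb].drop c.holes)))
            (.cons ((toCtx t').fill ([NSeq.node (E₁.map σ₂ + X₁') Γa' Δa' csa',
              NSeq.node (E₂.map σ₂ + X₂') Γb' Δb' csb'].take (toCtx t').holes))
              (NCtxs.fill cs' ([NSeq.node (E₁.map σ₂ + X₁') Γa' Δa' csa',
                NSeq.node (E₂.map σ₂ + X₂') Γb' Δb' csb'].drop (toCtx t').holes)))
          rw [hk, holes_toCtx, fill_toCtx]
          exact SRels.cons (SRel.congrσ h1 (fun v hv => (hagsub v hv).symm))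
            (oreb σ₂ hagtail E₁ E₂ Γa Δa csa Γa' Δa' csa' Γb Δb csb Γb' Δb' csb'
              m1 m2 m3 m4 m5 m6)

end

end NQML
namespace NQML

/-! ## Helpers for the main induction -/

def freshVar (s : Finset ℕ) : ℕ := s.sup id + 1

lemma freshVar_not_mem (s : Finset ℕ) : freshVar s ∉ s := by
  intro h
  have h2 : id (freshVar s) ≤ s.sup id := Finset.le_sup h
  simp only [freshVar, id] at h2
  omega

lemma foldr_fv_mem {l : List NSeq} {P : NSeq} (h : P ∈ l) :
    P.fv ⊆ l.foldr (fun s acc => s.fv ∪ acc) ∅ := by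
  induction l with
  | nil => cases h
  | cons s l ih =>
      rcases List.mem_cons.1 h with rfl | h
      · exact fun v hv => Finset.mem_union_left _ hv
      · exact fun v hv => Finset.mem_union_right _ (ih h hv)

mutual
theorem fv_sub_fill : ∀ (c : NCtx) (L : List NSeq) (P : NSeq), P ∈ L →
    L.length = c.holes → P.fv ⊆ (c.fill L).fv
  | .node X Γ Δ k cs, L, P, hP, hlen => by
      show P.fv ⊆ ((L.take k).foldl NSeq.merge (.node X Γ Δ (NCtxs.fill cs (L.drop k)))).fv
      rw [NSeq.fv_foldl_merge]
      rcases List.mem_append.1 ((List.take_append_drop k L) ▸ hP) with h | h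
      · exact fun v hv => Finset.mem_union_right _ (foldr_fv_mem h hv)
      · intro v hv
        apply Finset.mem_union_left
        have hrec := fv_sub_fills cs (L.drop k) P h (by
          have hh : (NCtx.node X Γ Δ k cs).holes = k + cs.holes := rfl
          rw [List.length_drop, hlen, hh]
          omega)
        show v ∈ (NSeq.node X Γ Δ (NCtxs.fill cs (L.drop k))).fv
        simp only [NSeq.fv, Finset.mem_union]
        exact Or.inr (hrec hv)

theorem fv_sub_fills : ∀ (cs : NCtxs) (L : List NSeq) (P : NSeq), P ∈ L →
    L.length = NCtxs.holes cs → P.fv ⊆ NSeqs.fv (NCtxs.fill cs L)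
  | .nil, L, P, hP, hlen => by
      have : L = [] := List.eq_nil_of_length_eq_zero (by rw [hlen]; rfl)
      subst this
      cases hP
  | .cons c cs, L, P, hP, hlen => by
      show P.fv ⊆ NSeqs.fv (.cons (c.fill (L.take c.holes)) (NCtxs.fill cs (L.drop c.holes)))
      have hlen' : L.length = c.holes + NCtxs.holes cs := hlen
      rcases List.mem_append.1 ((List.take_append_drop c.holes L) ▸ hP) with h | h
      · intro v hv
        show v ∈ (c.fill (L.take c.holes)).fv ∪ NSeqs.fv (NCtxs.fill cs (L.drop c.holes))
        refine Finset.mem_union_left _ (fv_sub_fill c _ P h ?_ hv)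
        rw [List.length_take]
        omega
      · intro v hv
        show v ∈ (c.fill (L.take c.holes)).fv ∪ NSeqs.fv (NCtxs.fill cs (L.drop c.holes))
        refine Finset.mem_union_right _ (fv_sub_fills cs _ P h ?_ hv)
        rw [List.length_drop]
        omega
end

/-- `Reb1` applied with no signature extension. -/
lemma Reb1.same {x : ℕ} {σ : ℕ → ℕ} {c c' : NCtx} {X₁ X₁' : Multiset ℕ}
    {Γ₁ Δ₁ : Multiset Fml} {cs₁ : NSeqs} (hreb : Reb1 x σ c c' X₁ X₁' Γ₁ Δ₁ cs₁)
    {Γ₂ Δ₂ : Multiset Fml} {cs₂ : NSeqs} {Γ₂' Δ₂' : Multiset Fml} {cs₂' : NSeqs}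
    (m1 : MRel σ Γ₂ Γ₂') (m2 : MRel σ Δ₂ Δ₂') (m3 : SRels x σ cs₂ cs₂') :
    SRel x σ (c.fill [.node X₁ Γ₂ Δ₂ cs₂]) (c'.fill [.node X₁' Γ₂' Δ₂' cs₂']) := by
  have := hreb σ (fun v _ => rfl) 0 Γ₂ Δ₂ cs₂ Γ₂' Δ₂' cs₂' m1 m2 m3
  simpa using this

/-- `Reb1` applied adding one signature variable, with a possibly updated renaming. -/
lemma Reb1.one {x : ℕ} {σ : ℕ → ℕ} {c c' : NCtx} {X₁ X₁' : Multiset ℕ}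
    {Γ₁ Δ₁ : Multiset Fml} {cs₁ : NSeqs} (hreb : Reb1 x σ c c' X₁ X₁' Γ₁ Δ₁ cs₁)
    (σ₂ : ℕ → ℕ) (hag : ∀ v ∈ (c.fill [.node X₁ Γ₁ Δ₁ cs₁]).fv, σ₂ v = σ v) (e : ℕ)
    {Γ₂ Δ₂ : Multiset Fml} {cs₂ : NSeqs} {Γ₂' Δ₂' : Multiset Fml} {cs₂' : NSeqs}
    (m1 : MRel σ₂ Γ₂ Γ₂') (m2 : MRel σ₂ Δ₂ Δ₂') (m3 : SRels x σ₂ cs₂ cs₂') :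
    SRel x σ₂ (c.fill [.node (e ::ₘ X₁) Γ₂ Δ₂ cs₂])
      (c'.fill [.node (σ₂ e ::ₘ X₁') Γ₂' Δ₂' cs₂']) := by
  have := hreb σ₂ hag {e} Γ₂ Δ₂ cs₂ Γ₂' Δ₂' cs₂' m1 m2 m3
  simpa [Multiset.singleton_add] using this

/-- `Reb2` applied with no signature extension. -/
lemma Reb2.same {x : ℕ} {σ : ℕ → ℕ} {c c' : NCtx} {X₁ X₁' X₂ X₂' : Multiset ℕ}
    {Γ₁ Δ₁ : Multiset Fml} {cs₁ : NSeqs} {Γ₂ Δ₂ : Multiset Fml} {cs₂ : NSeqs}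
    (hreb : Reb2 x σ c c' X₁ X₁' X₂ X₂' Γ₁ Δ₁ cs₁ Γ₂ Δ₂ cs₂)
    {Γa Δa : Multiset Fml} {csa : NSeqs} {Γa' Δa' : Multiset Fml} {csa' : NSeqs}
    {Γb Δb : Multiset Fml} {csb : NSeqs} {Γb' Δb' : Multiset Fml} {csb' : NSeqs}
    (m1 : MRel σ Γa Γa') (m2 : MRel σ Δa Δa') (m3 : SRels x σ csa csa')
    (m4 : MRel σ Γb Γb') (m5 : MRel σ Δb Δb') (m6 : SRels x σ csb csb') :
    SRel x σ (c.fill [.node X₁ Γa Δa csa, .node X₂ Γb Δb csb])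
      (c'.fill [.node X₁' Γa' Δa' csa', .node X₂' Γb' Δb' csb']) := by
  have := hreb σ (fun v _ => rfl) 0 0 Γa Δa csa Γa' Δa' csa' Γb Δb csb Γb' Δb' csb'
    m1 m2 m3 m4 m5 m6
  simpa using this

/-- `Reb2` applied adding one signature variable to both components. -/
lemma Reb2.oneone {x : ℕ} {σ : ℕ → ℕ} {c c' : NCtx} {X₁ X₁' X₂ X₂' : Multiset ℕ}
    {Γ₁ Δ₁ : Multiset Fml} {cs₁ : NSeqs} {Γ₂ Δ₂ : Multiset Fml} {cs₂ : NSeqs}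
    (hreb : Reb2 x σ c c' X₁ X₁' X₂ X₂' Γ₁ Δ₁ cs₁ Γ₂ Δ₂ cs₂) (e₁ e₂ : ℕ)
    {Γa Δa : Multiset Fml} {csa : NSeqs} {Γa' Δa' : Multiset Fml} {csa' : NSeqs}
    {Γb Δb : Multiset Fml} {csb : NSeqs} {Γb' Δb' : Multiset Fml} {csb' : NSeqs}
    (m1 : MRel σ Γa Γa') (m2 : MRel σ Δa Δa') (m3 : SRels x σ csa csa')
    (m4 : MRel σ Γb Γb') (m5 : MRel σ Δb Δb') (m6 : SRels x σ csb csb') :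
    SRel x σ (c.fill [.node (e₁ ::ₘ X₁) Γa Δa csa, .node (e₂ ::ₘ X₂) Γb Δb csb])
      (c'.fill [.node (σ e₁ ::ₘ X₁') Γa' Δa' csa', .node (σ e₂ ::ₘ X₂') Γb' Δb' csb']) := by
  have := hreb σ (fun v _ => rfl) {e₁} {e₂} Γa Δa csa Γa' Δa' csa' Γb Δb csb Γb' Δb' csb'
    m1 m2 m3 m4 m5 m6
  simpa [Multiset.singleton_add] using this

/-- `Reb2` with no extension on the first and one variable on the second component. -/
lemma Reb2.zeroone {x : ℕ} {σ : ℕ → ℕ} {c c' : NCtx} {X₁ X₁' X₂ X₂' : Multiset ℕ}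
    {Γ₁ Δ₁ : Multiset Fml} {cs₁ : NSeqs} {Γ₂ Δ₂ : Multiset Fml} {cs₂ : NSeqs}
    (hreb : Reb2 x σ c c' X₁ X₁' X₂ X₂' Γ₁ Δ₁ cs₁ Γ₂ Δ₂ cs₂) (e₂ : ℕ)
    {Γa Δa : Multiset Fml} {csa : NSeqs} {Γa' Δa' : Multiset Fml} {csa' : NSeqs}
    {Γb Δb : Multiset Fml} {csb : NSeqs} {Γb' Δb' : Multiset Fml} {csb' : NSeqs}
    (m1 : MRel σ Γa Γa') (m2 : MRel σ Δa Δa') (m3 : SRels x σ csa csa')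
    (m4 : MRel σ Γb Γb') (m5 : MRel σ Δb Δb') (m6 : SRels x σ csb csb') :
    SRel x σ (c.fill [.node X₁ Γa Δa csa, .node (e₂ ::ₘ X₂) Γb Δb csb])
      (c'.fill [.node X₁' Γa' Δa' csa', .node (σ e₂ ::ₘ X₂') Γb' Δb' csb']) := by
  have := hreb σ (fun v _ => rfl) 0 {e₂} Γa Δa csa Γa' Δa' csa' Γb Δb csb Γb' Δb' csb'
    m1 m2 m3 m4 m5 m6
  simpa [Multiset.singleton_add] using this

lemma MRel_cons_inv {σ : ℕ → ℕ} {A : Fml} {Γ Γ' : Multiset Fml} (h : MRel σ (A ::ₘ Γ) Γ') :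
    ∃ B Γ₀, FRel σ A B ∧ MRel σ Γ Γ₀ ∧ Γ' = B ::ₘ Γ₀ :=
  Multiset.rel_cons_left.1 h

lemma MRel_singleton_inv {σ : ℕ → ℕ} {A : Fml} {Γ' : Multiset Fml} (h : MRel σ {A} Γ') :
    ∃ B, FRel σ A B ∧ Γ' = {B} := by
  obtain ⟨B, Γ₀, h1, h2, rfl⟩ := Multiset.rel_cons_left.1 h
  have : Γ₀ = 0 := Multiset.rel_zero_left.1 h2
  subst this
  exact ⟨B, h1, rfl⟩

lemma MRel_zero_inv {σ : ℕ → ℕ} {Γ' : Multiset Fml} (h : MRel σ 0 Γ') : Γ' = 0 :=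
  Multiset.rel_zero_left.1 h

lemma FRel_eq_intro (σ : ℕ → ℕ) (a b : ℕ) : FRel σ (.eq a b) (.eq (σ a) (σ b)) := rfl

lemma Atomic.sub {P : Fml} (hP : P.Atomic) (a b : ℕ) : (P.sub a b).Atomic := by
  cases P with
  | rel n l => trivial
  | eq c d => trivial
  | bot => cases hP
  | imp A B => cases hP
  | all z A => cases hP
  | box A => cases hP

lemma rx_zero (x : ℕ) : rx x (Multiset.map σ 0) 0 := by
  simp only [Multiset.map_zero]
  exact rx_refl x 0

end NQML
namespace NQML

lemma FRel_box_intro {σ : ℕ → ℕ} {A A' : Fml} (h : FRel σ A A') :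
    FRel σ (.box A) (.box A') := by
  rw [FRel] at h ⊢
  simp [toDB, dbRen, h]

lemma FRel_all_intro {σ : ℕ → ℕ} {x0 x' : ℕ} {A A' : Fml}
    (h : toDB [x'] A' = dbRen σ (toDB [x0] A)) :
    FRel σ (.all x0 A) (.all x' A') := by
  rw [FRel]
  simp [toDB, dbRen, h]

/-- The main lemma: derivability is preserved along `SRel`. -/
theorem grand {L : Set Ax} {x : ℕ} : ∀ {n : ℕ} {S : NSeq}, Deriv L n S →
    ∀ {σ : ℕ → ℕ} {T : NSeq}, SRel x σ S T → Deriv L n T := by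
  intro n S h
  induction h with
  | @step n ps S hst hpr ih =>
    intro σ T hrel
    clear hpr
    cases hst with
    | init C X Γ Δ P hC hP =>
        obtain ⟨C', X', Γ', Δ', cs', oh, od, rfl, o1, o2, o3, o4, oreb⟩ :=
          transfer1_seq C _ _ _ _ _ hC hrel
        cases o3
        obtain ⟨Q, Γ₀, hQ, hΓ, rfl⟩ := MRel_cons_inv o1
        obtain ⟨Q₂, Δ₀, hQ₂, hΔ, rfl⟩ := MRel_cons_inv o2
        obtain ⟨rfl, hQa⟩ := hQ.atomic hP
        obtain ⟨rfl, -⟩ := hQ₂.atomic hP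
        exact Deriv.step (Step.init C' X' Γ₀ Δ₀ (Fml.substF σ P) oh hQa)
          (fun p hp => absurd hp List.not_mem_nil)
    | botL C X Γ Δ hC =>
        obtain ⟨C', X', Γ', Δ', cs', oh, od, rfl, o1, o2, o3, o4, oreb⟩ :=
          transfer1_seq C _ _ _ _ _ hC hrel
        cases o3
        obtain ⟨Q, Γ₀, hQ, hΓ, rfl⟩ := MRel_cons_inv o1
        rw [FRel_bot hQ]
        exact Deriv.step (Step.botL C' X' Γ₀ Δ' oh)
          (fun p hp => absurd hp List.not_mem_nil)
    | impL C X Γ Δ A B hC =>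
        obtain ⟨C', X', Γ', Δ', cs', oh, od, rfl, o1, o2, o3, o4, oreb⟩ :=
          transfer1_seq C _ _ _ _ _ hC hrel
        cases o3
        obtain ⟨Q, Γ₀, hQ, hΓ, rfl⟩ := MRel_cons_inv o1
        obtain ⟨A', B', rfl, hA, hB⟩ := FRel_imp hQ
        refine Deriv.step (Step.impL C' X' Γ₀ Δ' A' B' oh) ?_
        intro p hp
        simp only [List.mem_cons, List.not_mem_nil, or_false] at hp
        rcases hp with rfl | rfl
        · exact ih _ (by simp) (oreb.same hΓ (MRel.cons hA o2) SRels.nil)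
        · exact ih _ (by simp) (oreb.same (MRel.cons hB hΓ) o2 SRels.nil)
    | impR C X Γ Δ A B hC =>
        obtain ⟨C', X', Γ', Δ', cs', oh, od, rfl, o1, o2, o3, o4, oreb⟩ :=
          transfer1_seq C _ _ _ _ _ hC hrel
        cases o3
        obtain ⟨Q, Δ₀, hQ, hΔ, rfl⟩ := MRel_cons_inv o2
        obtain ⟨A', B', rfl, hA, hB⟩ := FRel_imp hQ
        refine Deriv.step (Step.impR C' X' Γ' Δ₀ A' B' oh) ?_
        intro p hp
        simp only [List.mem_cons, List.not_mem_nil, or_false] at hp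
        rcases hp with rfl
        exact ih _ (by simp) (oreb.same (MRel.cons hA o1) (MRel.cons hB hΔ) SRels.nil)
    | allL C X Γ Δ x0 z A hC =>
        obtain ⟨C', X', Γ', Δ', cs', oh, od, rfl, o1, o2, o3, o4, oreb⟩ :=
          transfer1_seq C _ _ _ _ _ hC hrel
        cases o3
        obtain ⟨Q, Γ₀, hQ, hΓ, rfl⟩ := MRel_cons_inv o1
        obtain ⟨x', A', rfl, hDB⟩ := FRel_all hQ
        have hz : σ z ∈ X' := o4 z (Multiset.mem_cons_self z X)
        have hXe : σ z ::ₘ X'.erase (σ z) = X' := Multiset.cons_erase hz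
        rw [← hXe]
        refine Deriv.step (Step.allL C' (X'.erase (σ z)) Γ₀ Δ' x' (σ z) A' oh) ?_
        intro p hp
        simp only [List.mem_cons, List.not_mem_nil, or_false] at hp
        rcases hp with rfl
        rw [hXe]
        have hm : MRel σ (A.sub z x0 ::ₘ Fml.all x0 A ::ₘ Γ)
            (A'.sub (σ z) x' ::ₘ Fml.all x' A' ::ₘ Γ₀) :=
          MRel.cons (FRel_sub_allL hDB z) (MRel.cons (FRel_all_intro hDB) hΓ)
        exact ih _ (by simp) (oreb.same hm o2 SRels.nil)
    | allR C X Γ Δ x0 y A hC hy =>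
        obtain ⟨C', X', Γ', Δ', cs', oh, od, rfl, o1, o2, o3, o4, oreb⟩ :=
          transfer1_seq C _ _ _ _ _ hC hrel
        cases o3
        obtain ⟨Q, Δ₀, hQ, hΔ, rfl⟩ := MRel_cons_inv o2
        obtain ⟨x', A', rfl, hDB⟩ := FRel_all hQ
        set T' := C'.fill [.node X' Γ' (Fml.all x' A' ::ₘ Δ₀) .nil] with hT'
        set u := freshVar T'.fv with hu
        have hufr : u ∉ T'.fv := freshVar_not_mem _
        set σ' := Function.update σ y u with hσ'
        have hag : ∀ v ∈ (C.fill [.node X Γ (Fml.all x0 A ::ₘ Δ) .nil]).fv, σ' v = σ v := by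
          intro v hv
          have : v ≠ y := fun e => hy (e ▸ hv)
          exact Function.update_of_ne this _ _
        have hPf : (NSeq.node X Γ (Fml.all x0 A ::ₘ Δ) .nil).fv ⊆
            (C.fill [.node X Γ (Fml.all x0 A ::ₘ Δ) .nil]).fv :=
          fv_sub_fill C _ _ (List.mem_singleton.2 rfl) (by simp [hC])
        have hyP : ∀ w ∈ msFv (Fml.all x0 A ::ₘ Δ), σ w = σ' w := by
          intro w hw
          have hws : w ∈ (NSeq.node X Γ (Fml.all x0 A ::ₘ Δ) .nil).fv := by
            simp only [NSeq.fv, Finset.mem_union]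
            exact Or.inl (Or.inr hw)
          exact (hag w (hPf hws)).symm
        have hyA : y ∉ (Fml.all x0 A).fv := by
          intro hyy
          refine hy (hPf ?_)
          simp only [NSeq.fv, Finset.mem_union, msFv_cons]
          exact Or.inl (Or.inr (Or.inl hyy))
        have hyΓ : ∀ w ∈ msFv Γ, σ w = σ' w := by
          intro w hw
          have hws : w ∈ (NSeq.node X Γ (Fml.all x0 A ::ₘ Δ) .nil).fv := by
            simp only [NSeq.fv, Finset.mem_union]
            exact Or.inl (Or.inl (Or.inr hw))
          exact (hag w (hPf hws)).symm
        have hm2 : MRel σ' (A.sub y x0 ::ₘ Δ) (A'.sub u x' ::ₘ Δ₀) := by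
          refine MRel.cons (FRel_sub_allR hDB hyA) (MRel.congrσ hΔ ?_)
          intro w hw
          exact hyP w (by rw [msFv_cons]; exact Finset.mem_union_right _ hw)
        have hm1 : MRel σ' Γ Γ' := MRel.congrσ o1 hyΓ
        have hprem := oreb.one σ' hag y hm1 hm2 SRels.nil
        rw [hσ'] at hprem
        rw [Function.update_self] at hprem
        refine Deriv.step (Step.allR C' X' Γ' Δ₀ x' u A' oh hufr) ?_
        intro p hp
        simp only [List.mem_cons, List.not_mem_nil, or_false] at hp
        rcases hp with rfl
        exact ih _ (by simp) hprem
    | boxL C X Y Γ Δ Φ Ψ ts A hC =>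
        obtain ⟨C', X', Γ', Δ', cs', oh, od, rfl, o1, o2, o3, o4, oreb⟩ :=
          transfer1_seq C _ _ _ _ _ hC hrel
        cases o3 with
        | cons h1 h2 =>
        cases h2
        cases h1 with
        | node rY mΦ mΨ hts =>
        obtain ⟨Q, Γ₀, hQ, hΓ, rfl⟩ := MRel_cons_inv o1
        obtain ⟨A', rfl, hA⟩ := FRel_box hQ
        rename_i Y' Φ' Ψ' ts'
        refine Deriv.step (Step.boxL C' X' Y' Γ₀ Δ' Φ' Ψ' ts' A' oh) ?_
        intro p hp
        simp only [List.mem_cons, List.not_mem_nil, or_false] at hp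
        rcases hp with rfl
        have hprem := oreb.same (MRel.cons (FRel_box_intro hA) hΓ) o2
          (SRels.cons (SRel.node rY (MRel.cons hA mΦ) mΨ hts) SRels.nil)
        exact ih _ (by simp) hprem
    | boxR C X Γ Δ A hC =>
        obtain ⟨C', X', Γ', Δ', cs', oh, od, rfl, o1, o2, o3, o4, oreb⟩ :=
          transfer1_seq C _ _ _ _ _ hC hrel
        cases o3
        obtain ⟨Q, Δ₀, hQ, hΔ, rfl⟩ := MRel_cons_inv o2
        obtain ⟨A', rfl, hA⟩ := FRel_box hQ
        refine Deriv.step (Step.boxR C' X' Γ' Δ₀ A' oh) ?_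
        intro p hp
        simp only [List.mem_cons, List.not_mem_nil, or_false] at hp
        rcases hp with rfl
        have hprem := oreb.same o1 hΔ (SRels.cons (SRel.node (rx_zero x) (MRel.zero σ)
          (MRel.cons hA (MRel.zero σ)) SRels.nil) SRels.nil)
        exact ih _ (by simp) hprem
    | ref C X Γ Δ z hC =>
        obtain ⟨C', X', Γ', Δ', cs', oh, od, rfl, o1, o2, o3, o4, oreb⟩ :=
          transfer1_seq C _ _ _ _ _ hC hrel
        cases o3
        refine Deriv.step (Step.ref C' X' Γ' Δ' (σ z) oh) ?_
        intro p hp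
        simp only [List.mem_cons, List.not_mem_nil, or_false] at hp
        rcases hp with rfl
        exact ih _ (by simp) (oreb.same (MRel.cons (FRel_eq_intro σ z z) o1) o2 SRels.nil)
    | repl C X Γ Δ x0 y0 z0 P hC hP =>
        obtain ⟨C', X', Γ', Δ', cs', oh, od, rfl, o1, o2, o3, o4, oreb⟩ :=
          transfer1_seq C _ _ _ _ _ hC hrel
        cases o3
        obtain ⟨Q1, Γ₀, hQ1, hΓ0, rfl⟩ := MRel_cons_inv o1
        obtain ⟨Q2, Γ₀', hQ2, hΓ, rfl⟩ := MRel_cons_inv hΓ0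
        rw [FRel_eq hQ1]
        obtain ⟨rfl, -⟩ := hQ2.atomic (Atomic.sub hP x0 z0)
        obtain ⟨P', z', hP'a, hx, hy0⟩ := atomic_subst_pair σ x0 y0 z0 P hP
        rw [← hx]
        refine Deriv.step (Step.repl C' X' Γ₀' Δ' (σ x0) (σ y0) z' P' oh hP'a) ?_
        intro p hp
        simp only [List.mem_cons, List.not_mem_nil, or_false] at hp
        rcases hp with rfl
        have hm : MRel σ (P.sub y0 z0 ::ₘ Fml.eq x0 y0 ::ₘ P.sub x0 z0 ::ₘ Γ)
            (P'.sub (σ y0) z' ::ₘ Fml.eq (σ x0) (σ y0) ::ₘ P'.sub (σ x0) z' ::ₘ Γ₀') := by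
          rw [hx, hy0]
          exact MRel.cons (FRel_substF σ (P.sub y0 z0)) (MRel.cons (FRel_eq_intro σ x0 y0)
            (MRel.cons hQ2 hΓ))
        have hprem := oreb.same hm o2 SRels.nil
        exact ih _ (by simp) hprem
    | replX C X Γ Δ x0 y0 hC =>
        obtain ⟨C', X', Γ', Δ', cs', oh, od, rfl, o1, o2, o3, o4, oreb⟩ :=
          transfer1_seq C _ _ _ _ _ hC hrel
        cases o3
        obtain ⟨Q, Γ₀, hQ, hΓ, rfl⟩ := MRel_cons_inv o1
        rw [FRel_eq hQ]
        have hz : σ x0 ∈ X' := o4 x0 (Multiset.mem_cons_self x0 X)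
        have hXe : σ x0 ::ₘ X'.erase (σ x0) = X' := Multiset.cons_erase hz
        rw [← hXe]
        refine Deriv.step (Step.replX C' (X'.erase (σ x0)) Γ₀ Δ' (σ x0) (σ y0) oh) ?_
        intro p hp
        simp only [List.mem_cons, List.not_mem_nil, or_false] at hp
        rcases hp with rfl
        have hprem := oreb.one σ (fun v _ => rfl) y0
          (MRel.cons (FRel_eq_intro σ x0 y0) hΓ) o2 SRels.nil
        have e1 : x0 ::ₘ y0 ::ₘ X = y0 ::ₘ x0 ::ₘ X := Multiset.cons_swap x0 y0 X
        have e2 : σ x0 ::ₘ σ y0 ::ₘ X'.erase (σ x0) = σ y0 ::ₘ X' := by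
          rw [Multiset.cons_swap, hXe]
        have hgoal : SRel x σ
            (C.fill [.node (x0 ::ₘ y0 ::ₘ X) (Fml.eq x0 y0 ::ₘ Γ) Δ .nil])
            (C'.fill [.node (σ x0 ::ₘ σ y0 ::ₘ X'.erase (σ x0))
              (Fml.eq (σ x0) (σ y0) ::ₘ Γ₀) Δ' .nil]) := by
          rw [e1, e2]
          exact hprem
        exact ih _ (by simp) hgoal
    | rig C X Y Γ Δ Φ Ψ x0 y0 hC =>
        obtain ⟨C', X₁', Γ₁', Δ₁', cs₁', X₂', Γ₂', Δ₂', cs₂', oh, od, rfl, o1, o2, o3,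
          p1, p2, p3, o7, oreb⟩ := transfer2_seq C _ _ _ _ _ _ _ _ _ hC hrel
        cases o3
        cases p3
        obtain ⟨Q, Γ₀, hQ, hΓ, rfl⟩ := MRel_cons_inv o1
        rw [FRel_eq hQ]
        refine Deriv.step (Step.rig C' X₁' X₂' Γ₀ Δ₁' Γ₂' Δ₂' (σ x0) (σ y0) oh) ?_
        intro p hp
        simp only [List.mem_cons, List.not_mem_nil, or_false] at hp
        rcases hp with rfl
        have hprem := oreb.same (MRel.cons (FRel_eq_intro σ x0 y0) hΓ) o2 SRels.nil
          (MRel.cons (FRel_eq_intro σ x0 y0) p1) p2 SRels.nil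
        exact ih _ (by simp) hprem
    | rD C X Γ Δ hD hC =>
        obtain ⟨C', X', Γ', Δ', cs', oh, od, rfl, o1, o2, o3, o4, oreb⟩ :=
          transfer1_seq C _ _ _ _ _ hC hrel
        cases o3
        refine Deriv.step (Step.rD C' X' Γ' Δ' hD oh) ?_
        intro p hp
        simp only [List.mem_cons, List.not_mem_nil, or_false] at hp
        rcases hp with rfl
        have hprem := oreb.same o1 o2
          (SRels.cons (SRel.node (rx_zero x) (MRel.zero σ) (MRel.zero σ) SRels.nil) SRels.nil)
        exact ih _ (by simp) hprem
    | rT C X Γ Δ A hT hC =>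
        obtain ⟨C', X', Γ', Δ', cs', oh, od, rfl, o1, o2, o3, o4, oreb⟩ :=
          transfer1_seq C _ _ _ _ _ hC hrel
        cases o3
        obtain ⟨Q, Γ₀, hQ, hΓ, rfl⟩ := MRel_cons_inv o1
        obtain ⟨A', rfl, hA⟩ := FRel_box hQ
        refine Deriv.step (Step.rT C' X' Γ₀ Δ' A' hT oh) ?_
        intro p hp
        simp only [List.mem_cons, List.not_mem_nil, or_false] at hp
        rcases hp with rfl
        exact ih _ (by simp) (oreb.same
          (MRel.cons hA (MRel.cons (FRel_box_intro hA) hΓ)) o2 SRels.nil)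
    | rB C X Y Γ Δ Φ Ψ ts A hB hC =>
        obtain ⟨C', X', Γ', Δ', cs', oh, od, rfl, o1, o2, o3, o4, oreb⟩ :=
          transfer1_seq C _ _ _ _ _ hC hrel
        cases o3 with
        | cons h1 h2 =>
        cases h2
        cases h1 with
        | node rY mΦ mΨ hts =>
        rename_i Y' Φc Ψ' ts'
        obtain ⟨Q, Φ₀, hQ, hΦ, rfl⟩ := MRel_cons_inv mΦ
        obtain ⟨A', rfl, hA⟩ := FRel_box hQ
        refine Deriv.step (Step.rB C' X' Y' Γ' Δ' Φ₀ Ψ' ts' A' hB oh) ?_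
        intro p hp
        simp only [List.mem_cons, List.not_mem_nil, or_false] at hp
        rcases hp with rfl
        have hprem := oreb.same (MRel.cons hA o1) o2
          (SRels.cons (SRel.node rY (MRel.cons (FRel_box_intro hA) hΦ) mΨ hts) SRels.nil)
        exact ih _ (by simp) hprem
    | r4 C X Y Γ Δ Φ Ψ ts A h4 hC =>
        obtain ⟨C', X', Γ', Δ', cs', oh, od, rfl, o1, o2, o3, o4, oreb⟩ :=
          transfer1_seq C _ _ _ _ _ hC hrel
        cases o3 with
        | cons h1 h2 =>
        cases h2
        cases h1 with
        | node rY mΦ mΨ hts =>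
        rename_i Y' Φ' Ψ' ts'
        obtain ⟨Q, Γ₀, hQ, hΓ, rfl⟩ := MRel_cons_inv o1
        obtain ⟨A', rfl, hA⟩ := FRel_box hQ
        refine Deriv.step (Step.r4 C' X' Y' Γ₀ Δ' Φ' Ψ' ts' A' h4 oh) ?_
        intro p hp
        simp only [List.mem_cons, List.not_mem_nil, or_false] at hp
        rcases hp with rfl
        have hprem := oreb.same (MRel.cons (FRel_box_intro hA) hΓ) o2
          (SRels.cons (SRel.node rY (MRel.cons (FRel_box_intro hA) mΦ) mΨ hts) SRels.nil)
        exact ih _ (by simp) hprem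
    | r5 C X Y Γ Δ Φ Ψ A h5 hdep =>
        have hC2 : C.holes = 2 := by
          obtain ⟨d₁, d₂, hd, -⟩ := hdep
          rw [← holeDepths_length, hd]
          rfl
        obtain ⟨C', X₁', Γ₁', Δ₁', cs₁', X₂', Γ₂', Δ₂', cs₂', oh, od, rfl, o1, o2, o3,
          p1, p2, p3, o7, oreb⟩ := transfer2_seq C _ _ _ _ _ _ _ _ _ hC2 hrel
        cases o3
        cases p3
        obtain ⟨Q, Γ₀, hQ, hΓ, rfl⟩ := MRel_cons_inv o1
        obtain ⟨A', rfl, hA⟩ := FRel_box hQ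
        have hdep' : ∃ d₁ d₂, C'.holeDepths = [d₁, d₂] ∧ 1 ≤ d₂ := by rw [od]; exact hdep
        refine Deriv.step (Step.r5 C' X₁' X₂' Γ₀ Δ₁' Γ₂' Δ₂' A' h5 hdep') ?_
        intro p hp
        simp only [List.mem_cons, List.not_mem_nil, or_false] at hp
        rcases hp with rfl
        have hprem := oreb.same (MRel.cons (FRel_box_intro hA) hΓ) o2 SRels.nil
          (MRel.cons (FRel_box_intro hA) p1) p2 SRels.nil
        exact ih _ (by simp) hprem
    | rcbf C X Y Γ Δ Φ Ψ ts x0 hcbf hC =>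
        obtain ⟨C', X', Γ', Δ', cs', oh, od, rfl, o1, o2, o3, o4, oreb⟩ :=
          transfer1_seq C _ _ _ _ _ hC hrel
        cases o3 with
        | cons h1 h2 =>
        cases h2
        cases h1 with
        | node rY mΦ mΨ hts =>
        rename_i Y' Φ' Ψ' ts'
        have hz : σ x0 ∈ X' := o4 x0 (Multiset.mem_cons_self x0 X)
        have hXe : σ x0 ::ₘ X'.erase (σ x0) = X' := Multiset.cons_erase hz
        rw [← hXe]
        refine Deriv.step (Step.rcbf C' (X'.erase (σ x0)) Y' Γ' Δ' Φ' Ψ' ts' (σ x0) hcbf oh) ?_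
        intro p hp
        simp only [List.mem_cons, List.not_mem_nil, or_false] at hp
        rcases hp with rfl
        have rY' : rx x ((x0 ::ₘ Y).map σ) (σ x0 ::ₘ Y') := by
          rw [Multiset.map_cons]
          exact rx_cons _ rY
        have hprem := oreb.same o1 o2
          (SRels.cons (SRel.node rY' mΦ mΨ hts) SRels.nil)
        rw [← hXe] at hprem
        exact ih _ (by simp) hprem
    | rbf C X Y Γ Δ Φ Ψ ts x0 hbf hC =>
        obtain ⟨C', X', Γ', Δ', cs', oh, od, rfl, o1, o2, o3, o4, oreb⟩ :=
          transfer1_seq C _ _ _ _ _ hC hrel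
        cases o3 with
        | cons h1 h2 =>
        cases h2
        cases h1 with
        | node rY mΦ mΨ hts =>
        rename_i Y₁' Φ' Ψ' ts'
        have hz : σ x0 ∈ Y₁' := rx_mem rY (by
          rw [Multiset.map_cons]
          exact Multiset.mem_cons_self _ _)
        have hYe : σ x0 ::ₘ Y₁'.erase (σ x0) = Y₁' := Multiset.cons_erase hz
        rw [← hYe]
        refine Deriv.step (Step.rbf C' X' (Y₁'.erase (σ x0)) Γ' Δ' Φ' Ψ' ts' (σ x0) hbf oh) ?_
        intro p hp
        simp only [List.mem_cons, List.not_mem_nil, or_false] at hp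
        rcases hp with rfl
        have hprem := oreb.one σ (fun v _ => rfl) x0 o1 o2
          (SRels.cons (SRel.node rY mΦ mΨ hts) SRels.nil)
        rw [← hYe] at hprem
        exact ih _ (by simp) hprem
    | rui C X Γ Δ x0 hui hC =>
        obtain ⟨C', X', Γ', Δ', cs', oh, od, rfl, o1, o2, o3, o4, oreb⟩ :=
          transfer1_seq C _ _ _ _ _ hC hrel
        cases o3
        refine Deriv.step (Step.rui C' X' Γ' Δ' (σ x0) hui oh) ?_
        intro p hp
        simp only [List.mem_cons, List.not_mem_nil, or_false] at hp
        rcases hp with rfl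
        exact ih _ (by simp) (oreb.one σ (fun v _ => rfl) x0 o1 o2 SRels.nil)
    | r5dom C X Y Γ Δ Φ Ψ x0 h5 hcb hdep =>
        have hC2 : C.holes = 2 := by
          obtain ⟨d₁, d₂, hd, -⟩ := hdep
          rw [← holeDepths_length, hd]
          rfl
        obtain ⟨C', X₁', Γ₁', Δ₁', cs₁', X₂', Γ₂', Δ₂', cs₂', oh, od, rfl, o1, o2, o3,
          p1, p2, p3, o7, oreb⟩ := transfer2_seq C _ _ _ _ _ _ _ _ _ hC2 hrel
        cases o3
        cases p3
        have hz : σ x0 ∈ X₁' := o7 x0 (Multiset.mem_cons_self x0 X)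
        have hXe : σ x0 ::ₘ X₁'.erase (σ x0) = X₁' := Multiset.cons_erase hz
        rw [← hXe]
        have hdep' : ∃ d₁ d₂, C'.holeDepths = [d₁, d₂] ∧ 1 ≤ d₁ ∧ 1 ≤ d₂ := by
          rw [od]; exact hdep
        refine Deriv.step (Step.r5dom C' (X₁'.erase (σ x0)) X₂' Γ₁' Δ₁' Γ₂' Δ₂' (σ x0)
          h5 hcb hdep') ?_
        intro p hp
        simp only [List.mem_cons, List.not_mem_nil, or_false] at hp
        rcases hp with rfl
        have hprem := Reb2.zeroone oreb x0 o1 o2 SRels.nil p1 p2 SRels.nil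
        rw [← hXe] at hprem
        exact ih _ (by simp) hprem

end NQML
namespace NQML

lemma rx_SW (x : ℕ) (X : Multiset ℕ) : rx x X (x ::ₘ X) := by
  refine ⟨?_, fun h => Multiset.mem_cons_of_mem h⟩
  rw [Multiset.filter_cons_of_neg (p := fun v => v ≠ x) X (by simp)]

lemma rx_SC (x : ℕ) (X : Multiset ℕ) : rx x (x ::ₘ x ::ₘ X) (x ::ₘ X) := by
  refine ⟨?_, fun _ => Multiset.mem_cons_self x X⟩
  rw [Multiset.filter_cons_of_neg (p := fun v => v ≠ x) _ (by simp),
    Multiset.filter_cons_of_neg (p := fun v => v ≠ x) _ (by simp)]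

end NQML
namespace NQML

/-- **Signature structural rules (Lemma 5)**: signature weakening `SW` — from
`S{X; Γ ⇒ Δ}` infer `S{X,x; Γ ⇒ Δ}` — and signature contraction `SC` — from
`S{X,x,x; Γ ⇒ Δ}` infer `S{X,x; Γ ⇒ Δ}` — are height-preserving admissible in every
properly closed nested calculus `NQ.L`. -/
theorem signature_structural_rules_hp_admissible (L : Set Ax) (hL : ProperlyClosed L)
    (C : NCtx) (hC : C.holes = 1) (X : Multiset ℕ) (Γ Δ : Multiset Fml) (x : ℕ) (n : ℕ) :
    (Deriv L n (C.fill [.node X Γ Δ .nil]) →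
      Deriv L n (C.fill [.node (x ::ₘ X) Γ Δ .nil])) ∧
    (Deriv L n (C.fill [.node (x ::ₘ x ::ₘ X) Γ Δ .nil]) →
      Deriv L n (C.fill [.node (x ::ₘ X) Γ Δ .nil])) := by
  constructor
  · intro h
    refine grand h (NCtx.fill_srel x C ?_)
    refine List.Forall₂.cons (SRel.node ?_ (MRel.refl Γ) (MRel.refl Δ) SRels.nil) List.Forall₂.nil
    rw [Multiset.map_id]
    exact rx_SW x X
  · intro h
    refine grand h (NCtx.fill_srel x C ?_)
    refine List.Forall₂.cons (SRel.node ?_ (MRel.refl Γ) (MRel.refl Δ) SRels.nil) List.Forall₂.nil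
    rw [Multiset.map_id]
    exact rx_SC x X

end NQML
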